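/- arXiv:1201.3518 — 6 statements merged into one kernel-verified Lean document; each statement's English description precedes it below -/
import Mathlib

section
/- Let n ≥ 1 and let e be an edge of the complete graph K_{n+1}. The map induced by the contraction c_e, from the set T_{n+1}^e of spanning trees of K_{n+1} containing e to the set T_n of spanning trees of K_n, is surjective: every spanning tree of K_n is the contracted image of some spanning tree of K_{n+1} containing e. -/
/-!
Choose a section `g` of `q` with `g (q u) = u`; it is injective, and by the hypotheses on `q` its
range is everything except `v`. The image of a tree `T'` of `K_n` under `g`, together with the
edge `uv`, is a tree of `K_{n+1}`: it is connected, since `v` hangs off the copy of `T'`, and it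
has one more edge than `T'` on one more vertex. Contracting `uv` undoes the embedding, since
`q ∘ g = id`.
-/

namespace SimpleGraph

variable {V W : Type*} {G : SimpleGraph W} {f : W ↪ V} {u v : V}

theorem Connected.map_sup_edge (hG : G.Connected) (hu : u ∈ Set.range f)
    (hrange : {v}ᶜ ⊆ Set.range f) : (G.map f ⊔ edge u v).Connected := by
  have : Nonempty V := ⟨u⟩
  obtain ⟨a, rfl⟩ := hu
  suffices ∀ x, (G.map f ⊔ edge (f a) v).Reachable (f a) x from
    .mk fun x y ↦ (this x).symm.trans (this y)
  intro x
  by_cases hx : x = v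
  · subst hx
    by_cases hax : f a = x
    · rw [hax]
    exact Adj.reachable (Or.inr (by simp [edge_adj, hax]))
  · obtain ⟨b, rfl⟩ := hrange hx
    exact (hG.preconnected a b).map ((Hom.ofLE le_sup_left).comp (Embedding.map f G).toHom)

theorem notMem_edgeSet_map_of_notMem_range (hv : v ∉ Set.range f) :
    s(u, v) ∉ (G.map f).edgeSet := fun h ↦ hv <| by
  obtain ⟨_, _, _, _, rfl⟩ := (map_adj f G u v).mp h
  exact ⟨_, rfl⟩

theorem card_edgeSet_map_sup_edge [Finite G.edgeSet] (huv : u ≠ v) (hv : v ∉ Set.range f) :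
    Nat.card (G.map f ⊔ edge u v).edgeSet = Nat.card G.edgeSet + 1 := by
  rw [edgeSet_sup, edgeSet_edge_of_ne huv, Set.union_singleton, Nat.card_coe_set_eq,
    Set.ncard_insert_of_notMem (notMem_edgeSet_map_of_notMem_range hv)
      ((G.edgeSet.toFinite.image _).subset (edgeSet_map f G).le),
    edgeSet_map, Set.ncard_image_of_injective _ f.sym2Map.injective, Nat.card_coe_set_eq]

theorem IsTree.map_sup_edge [Finite V] (hG : G.IsTree) (huv : u ≠ v)
    (hrange : Set.range f = {v}ᶜ) : (G.map f ⊔ edge u v).IsTree := by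
  have : Finite W := .of_injective f f.injective
  have hcard : Nat.card V = Nat.card W + 1 := by
    rw [← Nat.card_range_of_injective f.injective, hrange, Nat.card_coe_set_eq,
      Set.ncard_compl, Set.ncard_singleton]
    have : 0 < Nat.card V := Nat.card_pos_iff.mpr ⟨⟨v⟩, inferInstance⟩
    omega
  rw [isTree_iff_connected_and_card, card_edgeSet_map_sup_edge huv (by simp [hrange]), hcard,
    ← (isTree_iff_connected_and_card.mp hG).2]
  exact ⟨hG.connected.map_sup_edge (by simp [hrange, huv]) hrange.ge, rfl⟩

theorem edgeSet_map_sup_edge_diff (hv : v ∉ Set.range f) :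
    (G.map f ⊔ edge u v).edgeSet \ {s(u, v)} = (G.map f).edgeSet := by
  rw [edgeSet_sup, Set.union_sdiff_distrib, Set.sdiff_eq_empty.mpr edgeSet_edge_subset,
    Set.union_empty, Set.sdiff_singleton_eq_self (notMem_edgeSet_map_of_notMem_range hv)]

theorem image_sym2Map_edgeSet_map {q : V → W} (hq : Function.LeftInverse q f) :
    Sym2.map q '' (G.map f).edgeSet = G.edgeSet := by
  rw [edgeSet_map, Set.image_image]
  simp only [Function.Embedding.sym2Map_apply, Sym2.map_map, hq.comp_eq_id,
    Sym2.map_id', id_eq, Set.image_id']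

end SimpleGraph

theorem Function.Surjective.exists_rightInverse_apply_eq {α β : Type*} {q : α → β}
    (hq : Function.Surjective q) (a : α) :
    ∃ g : β → α, Function.RightInverse g q ∧ g (q a) = a := by
  classical
  refine ⟨Function.update (Function.surjInv hq) (q a) a, fun b ↦ ?_, by simp⟩
  by_cases hb : b = q a
  · simp [hb]
  · simp [hb, Function.surjInv_eq hq]

theorem range_eq_compl_singleton_of_rightInverse {α β : Type*} {q : α → β} {g : β → α}
    {u v : α} (hg : Function.RightInverse g q) (hgu : g (q u) = u) (huv : u ≠ v)
    (hquv : q u = q v) (hinj : ∀ x y, q x = q y → x = y ∨ s(x, y) = s(u, v)) :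
    Set.range g = {v}ᶜ := by
  have hv : ∀ b, g b ≠ v := fun b hb ↦ huv <| by
    rw [← hgu, hquv, ← hb, hg b]
  ext x
  refine ⟨by rintro ⟨b, rfl⟩; exact hv b, fun hx ↦ ⟨q x, ?_⟩⟩
  rcases hinj (g (q x)) x (hg _) with h | h
  · exact h
  · rcases Sym2.eq_iff.mp h with ⟨_, h⟩ | ⟨h, _⟩
    · exact absurd h hx
    · exact absurd h (hv _)

theorem contraction_surjective_on_spanning_trees_general (n : ℕ)
    (u v : Fin (n + 1)) (huv : u ≠ v)
    (q : Fin (n + 1) → Fin n) (hq : Function.Surjective q) (hquv : q u = q v)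
    (hinj : ∀ x y : Fin (n + 1), q x = q y → x = y ∨ s(x, y) = s(u, v)) :
    ∀ T' : SimpleGraph (Fin n), T'.IsTree →
      ∃ T : SimpleGraph (Fin (n + 1)), T.IsTree ∧ s(u, v) ∈ T.edgeSet ∧
        SimpleGraph.fromEdgeSet (Sym2.map q '' (T.edgeSet \ {s(u, v)})) = T' := by
  intro T' hT'
  obtain ⟨g, hg, hgu⟩ := hq.exists_rightInverse_apply_eq u
  let f : Fin n ↪ Fin (n + 1) := ⟨g, hg.injective⟩
  have hrange : Set.range f = {v}ᶜ :=
    range_eq_compl_singleton_of_rightInverse hg hgu huv hquv hinj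
  refine ⟨T'.map f ⊔ SimpleGraph.edge u v, hT'.map_sup_edge huv hrange, ?_, ?_⟩
  · simp [huv]
  · rw [SimpleGraph.edgeSet_map_sup_edge_diff (by simp [hrange]),
      SimpleGraph.image_sym2Map_edgeSet_map (f := f) hg, SimpleGraph.fromEdgeSet_edgeSet]

/-- The contraction map from spanning trees of `K_{n+1}` containing the edge
`e = s(u,v)` to spanning trees of `K_n` is surjective. -/
theorem contraction_surjective_on_spanning_trees (n : ℕ) (hn : 1 ≤ n)
    (u v : Fin (n + 1)) (huv : u ≠ v)
    (q : Fin (n + 1) → Fin n) (hq : Function.Surjective q) (hquv : q u = q v)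
    (hinj : ∀ x y : Fin (n + 1), q x = q y → x = y ∨ s(x, y) = s(u, v)) :
    ∀ T' : SimpleGraph (Fin n), T'.IsTree →
      ∃ T : SimpleGraph (Fin (n + 1)), T.IsTree ∧ s(u, v) ∈ T.edgeSet ∧
        SimpleGraph.fromEdgeSet (Sym2.map q '' (T.edgeSet \ {s(u, v)})) = T' :=
  contraction_surjective_on_spanning_trees_general n u v huv q hq hquv hinj
end

section
/- Let n ≥ 1, let e be an edge of the complete graph K_{n+1} with endpoints u ≠ v, and let s_e = q(u) = q(v) be the corresponding special vertex of K_n. For every spanning tree T of K_n, the number of spanning trees T' of K_{n+1} containing e whose contracted image under c_e equals T is exactly 2^{ν_T(s_e)}, where ν_T(s_e) denotes the degree (valence) of the vertex s_e in the tree T. -/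
/-!
A spanning tree of `K_{n+1}` over `T` is determined by the set of neighbours of `q u` in `T`
that it attaches to `u`: every such neighbour is attached to exactly one of `u` and `v` (to both
would close a triangle with `uv`), so the tree lies inside the corresponding splitting of `q u`,
and a tree inside an acyclic graph is all of it. Conversely, splitting `q u` along any subset of
its neighbours gives a connected graph (`T` is connected and `uv` joins the fibres of `q`) with one
edge more than `T` on one vertex more, hence a tree.
-/

open Function

namespace Function

variable {V V' : Type*} {q : V' → V} {u v x y : V'}

def IdentifiesExactly (q : V' → V) (u v : V') : Prop :=
  ∀ x y, q x = q y ↔ x = y ∨ s(x, y) = s(u, v)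

namespace IdentifiesExactly

theorem of_apply_eq (hquv : q u = q v) (hinj : ∀ x y, q x = q y → x = y ∨ s(x, y) = s(u, v)) :
    IdentifiesExactly q u v := by
  refine fun x y => ⟨hinj x y, ?_⟩
  rintro (rfl | hxy)
  · rfl
  · obtain ⟨rfl, rfl⟩ | ⟨rfl, rfl⟩ := Sym2.eq_iff.mp hxy
    exacts [hquv, hquv.symm]

theorem apply_eq (h : IdentifiesExactly q u v) : q u = q v :=
  (h u v).mpr (.inr rfl)

theorem apply_eq_apply_left_iff (h : IdentifiesExactly q u v) : q x = q u ↔ x = u ∨ x = v := by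
  rw [h, Sym2.eq_iff]
  tauto

theorem eq_of_apply_eq (h : IdentifiesExactly q u v) (hxu : x ≠ u) (hxv : x ≠ v)
    (hxy : q y = q x) : y = x := by
  rcases (h y x).mp hxy with hyx | hyx
  · exact hyx
  · obtain ⟨-, rfl⟩ | ⟨-, rfl⟩ := Sym2.eq_iff.mp hyx
    exacts [(hxv rfl).elim, (hxu rfl).elim]

theorem apply_ne_apply (h : IdentifiesExactly q u v) (hxy : x ≠ y) (he : s(x, y) ≠ s(u, v)) :
    q x ≠ q y :=
  fun hq => ((h x y).mp hq).elim hxy he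

end IdentifiesExactly

end Function

namespace SimpleGraph

variable {V V' : Type*} {q : V' → V} {u v x y : V'}

def contract (G : SimpleGraph V') (q : V' → V) (e : Sym2 V') : SimpleGraph V :=
  fromEdgeSet (Sym2.map q '' (G.edgeSet \ {e}))

theorem contract_adj {G : SimpleGraph V'} {e : Sym2 V'} {a b : V} :
    (G.contract q e).Adj a b ↔ a ≠ b ∧ ∃ x y, G.Adj x y ∧ s(x, y) ≠ e ∧ q x = a ∧ q y = b := by
  simp only [contract, fromEdgeSet_adj, Set.mem_image, Set.mem_sdiff, Set.mem_singleton_iff]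
  constructor
  · rintro ⟨⟨e', ⟨he', hne⟩, hmap⟩, hab⟩
    induction e' using Sym2.ind with
    | _ x y =>
    rw [Sym2.map_mk, Sym2.eq_iff] at hmap
    rw [mem_edgeSet] at he'
    obtain ⟨rfl, rfl⟩ | ⟨rfl, rfl⟩ := hmap
    exacts [⟨hab, x, y, he', hne, rfl, rfl⟩, ⟨hab, y, x, he'.symm, by rwa [Sym2.eq_swap], rfl, rfl⟩]
  · rintro ⟨hab, x, y, hxy, hne, rfl, rfl⟩
    exact ⟨⟨s(x, y), ⟨hxy, hne⟩, rfl⟩, hab⟩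

theorem contract_adj_apply (h : IdentifiesExactly q u v) {G : SimpleGraph V'} (hxy : G.Adj x y)
    (he : s(x, y) ≠ s(u, v)) : (G.contract q s(u, v)).Adj (q x) (q y) :=
  contract_adj.mpr ⟨h.apply_ne_apply hxy.ne he, x, y, hxy, he, rfl, rfl⟩

theorem edgeSet_contract (h : IdentifiesExactly q u v) (G : SimpleGraph V') :
    (G.contract q s(u, v)).edgeSet = Sym2.map q '' (G.edgeSet \ {s(u, v)}) := by
  refine (edgeSet_fromEdgeSet _).trans (sdiff_eq_left.mpr (Set.disjoint_right.mpr ?_))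
  rintro _ hdiag ⟨e, ⟨he, hne⟩, rfl⟩
  induction e using Sym2.ind with
  | _ x y =>
  rw [Sym2.map_mk, Sym2.mem_diagSet, Sym2.mk_isDiag_iff] at hdiag
  exact h.apply_ne_apply (G.ne_of_adj he) hne hdiag

theorem Preconnected.lift {G : SimpleGraph V'} {H : SimpleGraph V} (hH : H.Preconnected)
    (q : V' → V)
    (hfiber : ∀ x y, q x = q y → G.Reachable x y)
    (hlift : ∀ a b, H.Adj a b → ∃ x y, G.Adj x y ∧ q x = a ∧ q y = b) : G.Preconnected := by
  suffices ∀ {a b} (p : H.Walk a b) x y, q x = a → q y = b → G.Reachable x y from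
    fun x y => this (hH (q x) (q y)).some x y rfl rfl
  intro a b p
  induction p with
  | nil => exact fun x y hx hy => hfiber x y (hx.trans hy.symm)
  | cons hac p ih =>
    intro x y hx hy
    obtain ⟨x', z, hx'z, rfl, rfl⟩ := hlift _ _ hac
    exact (hfiber x x' hx).trans (hx'z.reachable.trans (ih z y rfl hy))

theorem IsTree.eq_of_le {G H : SimpleGraph V} (hG : G.IsTree) (hH : H.IsAcyclic) (hle : G ≤ H) :
    G = H :=
  le_antisymm hle ((isTree_iff_maximal_isAcyclic.mp hG).2.2 hH hle)

theorem isTree_of_contract_eq [Finite V'] [Finite V] (h : IdentifiesExactly q u v)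
    (hcard : Nat.card V' = Nat.card V + 1) {G : SimpleGraph V'} {T : SimpleGraph V}
    (hT : T.IsTree) (he : s(u, v) ∈ G.edgeSet) (hG : G.contract q s(u, v) = T)
    (hinjOn : Set.InjOn (Sym2.map q) (G.edgeSet \ {s(u, v)})) : G.IsTree := by
  have hconn : G.Connected := by
    have : Nonempty V' := ⟨u⟩
    refine ⟨hT.connected.preconnected.lift q (fun x y hxy => ?_) (fun a b hab => ?_)⟩
    · rcases (h x y).mp hxy with rfl | hxy
      · rfl
      · obtain ⟨rfl, rfl⟩ | ⟨rfl, rfl⟩ := Sym2.eq_iff.mp hxy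
        exacts [Adj.reachable he, (Adj.reachable he).symm]
    · obtain ⟨-, x, y, hxy, -, rfl, rfl⟩ := contract_adj.mp (hG ▸ hab)
      exact ⟨x, y, hxy, rfl, rfl⟩
  rw [isTree_iff_connected_and_card] at hT ⊢
  refine ⟨hconn, ?_⟩
  have hE : (G.edgeSet \ {s(u, v)}).ncard = T.edgeSet.ncard := by
    rw [← hG, edgeSet_contract h, hinjOn.ncard_image]
  rw [Nat.card_coe_set_eq, ← Set.ncard_sdiff_singleton_add_one he, hE, ← Nat.card_coe_set_eq,
    hT.2, hcard]

/-- Split the vertex `q u` of `T` into the edge `uv`, attaching a neighbour of `q u` to `u` if it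
lies in `B` and to `v` otherwise. -/
def splitVertex (T : SimpleGraph V) (q : V' → V) (u v : V') (huv : u ≠ v) (B : Set V) :
    SimpleGraph V' where
  Adj x y := s(x, y) = s(u, v) ∨ (T.Adj (q x) (q y) ∧
    (x = u ∨ x = v → (x = u ↔ q y ∈ B)) ∧ (y = u ∨ y = v → (y = u ↔ q x ∈ B)))
  symm := ⟨fun x y => by
    rintro (hxy | ⟨hT, hx, hy⟩)
    exacts [.inl (Sym2.eq_swap.trans hxy), .inr ⟨hT.symm, hy, hx⟩]⟩
  loopless := ⟨fun x => by
    rintro (hx | ⟨hT, -⟩)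
    · obtain ⟨rfl, rfl⟩ | ⟨rfl, rfl⟩ := Sym2.eq_iff.mp hx <;> exact huv rfl
    · exact T.loopless.irrefl _ hT⟩

section splitVertex

variable {T : SimpleGraph V} {B : Set V} (huv : u ≠ v)

theorem contract_splitVertex (h : IdentifiesExactly q u v) (hq : Surjective q) :
    (T.splitVertex q u v huv B).contract q s(u, v) = T := by
  have lift : ∀ a b, T.Adj a b → b ≠ q u → ∃ x y, (T.splitVertex q u v huv B).Adj x y ∧
      s(x, y) ≠ s(u, v) ∧ q x = a ∧ q y = b := by
    rintro a b hab hb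
    obtain ⟨y, rfl⟩ := hq b
    have hy : ¬(y = u ∨ y = v) := mt h.apply_eq_apply_left_iff.mpr hb
    have hne : ∀ x, s(x, y) ≠ s(u, v) := fun x hxy => hy (by
      obtain ⟨-, rfl⟩ | ⟨-, rfl⟩ := Sym2.eq_iff.mp hxy <;> simp)
    by_cases ha : a = q u
    · subst ha
      by_cases hyB : q y ∈ B
      · exact ⟨u, y, .inr ⟨hab, fun _ => iff_of_true rfl hyB, (absurd · hy)⟩, hne u, rfl, rfl⟩
      · refine ⟨v, y, .inr ⟨by rwa [← h.apply_eq], fun _ => iff_of_false huv.symm hyB,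
          (absurd · hy)⟩, hne v, h.apply_eq.symm, rfl⟩
    · obtain ⟨x, rfl⟩ := hq a
      have hx : ¬(x = u ∨ x = v) := mt h.apply_eq_apply_left_iff.mpr ha
      exact ⟨x, y, .inr ⟨hab, (absurd · hx), (absurd · hy)⟩, hne x, rfl, rfl⟩
  ext a b
  rw [contract_adj]
  constructor
  · rintro ⟨-, x, y, hxy | ⟨hT, -⟩, hne, rfl, rfl⟩
    exacts [(hne hxy).elim, hT]
  · intro hab
    refine ⟨hab.ne, ?_⟩
    by_cases hb : b = q u
    · obtain ⟨y, x, hyx, hne, rfl, rfl⟩ := lift b a hab.symm (hb ▸ hab.ne)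
      exact ⟨x, y, hyx.symm, by rwa [Sym2.eq_swap], rfl, rfl⟩
    · exact lift a b hab hb

theorem injOn_splitVertex (h : IdentifiesExactly q u v) :
    Set.InjOn (Sym2.map q) ((T.splitVertex q u v huv B).edgeSet \ {s(u, v)}) := by
  have key : ∀ {x y x' y'}, (T.splitVertex q u v huv B).Adj x y →
      (T.splitVertex q u v huv B).Adj x' y' → s(x, y) ≠ s(u, v) → s(x', y') ≠ s(u, v) →
      q x = q x' → q y = q y' → x = x' := by
    rintro x y x' y' (hxy | ⟨-, hx, -⟩) (hxy' | ⟨-, hx', -⟩) hne hne' hqx hqy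
    · exact (hne hxy).elim
    · exact (hne hxy).elim
    · exact (hne' hxy').elim
    rcases (h x x').mp hqx with rfl | hxx'
    · rfl
    · obtain ⟨rfl, rfl⟩ | ⟨rfl, rfl⟩ := Sym2.eq_iff.mp hxx'
      · exact (huv.symm ((hx' (.inr rfl)).mpr (hqy ▸ (hx (.inl rfl)).mp rfl))).elim
      · exact (huv.symm ((hx (.inr rfl)).mpr (hqy ▸ (hx' (.inl rfl)).mp rfl))).elim
  intro e he e' he' hee'
  induction e using Sym2.ind with | _ x y =>
  induction e' using Sym2.ind with | _ x' y' =>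
  obtain ⟨hxy : (T.splitVertex q u v huv B).Adj x y, hne : s(x, y) ≠ s(u, v)⟩ := he
  obtain ⟨hxy' : (T.splitVertex q u v huv B).Adj x' y', hne' : s(x', y') ≠ s(u, v)⟩ := he'
  have hne_swap : s(y, x) ≠ s(u, v) := by rwa [Sym2.eq_swap]
  have hne_swap' : s(y', x') ≠ s(u, v) := by rwa [Sym2.eq_swap]
  rw [Sym2.map_mk, Sym2.map_mk, Sym2.eq_iff] at hee'
  rcases hee' with ⟨hx, hy⟩ | ⟨hx, hy⟩
  · rw [key hxy hxy' hne hne' hx hy, key hxy.symm hxy'.symm hne_swap hne_swap' hy hx]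
  · rw [key hxy hxy'.symm hne hne_swap' hx hy, key hxy.symm hxy' hne_swap hne' hy hx,
      Sym2.eq_swap]

theorem isTree_splitVertex [Finite V'] [Finite V] (h : IdentifiesExactly q u v)
    (hq : Surjective q) (hcard : Nat.card V' = Nat.card V + 1) (hT : T.IsTree) :
    (T.splitVertex q u v huv B).IsTree :=
  isTree_of_contract_eq h hcard hT (.inl rfl) (contract_splitVertex huv h hq)
    (injOn_splitVertex huv h)

theorem image_neighborSet_splitVertex (h : IdentifiesExactly q u v) (hq : Surjective q)
    (hB : B ⊆ T.neighborSet (q u)) :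
    q '' ((T.splitVertex q u v huv B).neighborSet u \ {v}) = B := by
  ext b
  constructor
  · rintro ⟨x, ⟨hux | ⟨-, hu, -⟩, hxv : x ≠ v⟩, rfl⟩
    · obtain ⟨-, rfl⟩ | ⟨rfl, -⟩ := Sym2.eq_iff.mp hux
      exacts [(hxv rfl).elim, (huv rfl).elim]
    · exact (hu (.inl rfl)).mp rfl
  · intro hb
    obtain ⟨x, rfl⟩ := hq b
    have hx : ¬(x = u ∨ x = v) := mt h.apply_eq_apply_left_iff.mpr (hB hb).ne'
    exact ⟨x, ⟨.inr ⟨hB hb, fun _ => iff_of_true rfl hb, (absurd · hx)⟩, (hx <| .inr ·)⟩, rfl⟩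

end splitVertex

theorem image_neighborSet_subset (h : IdentifiesExactly q u v) {G : SimpleGraph V'}
    {T : SimpleGraph V} (hG : G.contract q s(u, v) = T) :
    q '' (G.neighborSet u \ {v}) ⊆ T.neighborSet (q u) := by
  rintro _ ⟨x, ⟨hux, hxv : x ≠ v⟩, rfl⟩
  refine hG ▸ contract_adj_apply h hux fun hux' => hxv ?_
  obtain ⟨-, rfl⟩ | ⟨-, rfl⟩ := Sym2.eq_iff.mp hux'
  exacts [rfl, (hux.ne rfl).elim]

theorem le_splitVertex (h : IdentifiesExactly q u v) (huv : u ≠ v) {G : SimpleGraph V'}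
    {T : SimpleGraph V} (hG : G.IsAcyclic) (he : s(u, v) ∈ G.edgeSet)
    (hGT : G.contract q s(u, v) = T) :
    G ≤ T.splitVertex q u v huv (q '' (G.neighborSet u \ {v})) := by
  have side : ∀ {x y}, G.Adj x y → s(x, y) ≠ s(u, v) → x = u ∨ x = v →
      (x = u ↔ q y ∈ q '' (G.neighborSet u \ {v})) := by
    intro x y hxy hne hx
    have hy : y ≠ u ∧ y ≠ v := by
      rcases hx with rfl | rfl
      · exact ⟨hxy.ne', fun hyv => hne (hyv ▸ rfl)⟩
      · exact ⟨fun hyu => hne (hyu ▸ Sym2.eq_swap), hxy.ne'⟩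
    rcases hx with rfl | rfl
    · exact iff_of_true rfl ⟨y, ⟨hxy, hy.2⟩, rfl⟩
    · refine iff_of_false huv.symm ?_
      rintro ⟨z, ⟨huz, -⟩, hzy⟩
      obtain rfl := h.eq_of_apply_eq hy.1 hy.2 hzy
      exact isIndepSet_neighborSet_of_triangleFree G (hG.cliqueFree le_rfl) u he huz hy.2.symm hxy
  intro x y hxy
  by_cases hne : s(x, y) = s(u, v)
  · exact .inl hne
  refine .inr ⟨hGT ▸ contract_adj_apply h hxy hne, side hxy hne, side hxy.symm ?_⟩
  rwa [Sym2.eq_swap]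

end SimpleGraph

theorem card_preimages_of_contraction_general (n : ℕ)
    (u v : Fin (n + 1)) (huv : u ≠ v)
    (q : Fin (n + 1) → Fin n) (hq : Function.Surjective q) (hquv : q u = q v)
    (hinj : ∀ x y : Fin (n + 1), q x = q y → x = y ∨ s(x, y) = s(u, v))
    (T : SimpleGraph (Fin n)) (hT : T.IsTree) :
    Nat.card {T' : SimpleGraph (Fin (n + 1)) //
        T'.IsTree ∧ s(u, v) ∈ T'.edgeSet ∧
        SimpleGraph.fromEdgeSet (Sym2.map q '' (T'.edgeSet \ {s(u, v)})) = T} =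
      2 ^ Set.ncard {w : Fin n | T.Adj (q u) w} := by
  have h := Function.IdentifiesExactly.of_apply_eq hquv hinj
  have hcard : Nat.card (Fin (n + 1)) = Nat.card (Fin n) + 1 := by simp
  have hsplit (B : Set (Fin n)) := SimpleGraph.isTree_splitVertex (B := B) huv h hq hcard hT
  let preimages : {T' : SimpleGraph (Fin (n + 1)) //
      T'.IsTree ∧ s(u, v) ∈ T'.edgeSet ∧ T'.contract q s(u, v) = T} ≃ 𝒫 T.neighborSet (q u) :=
    { toFun T' := ⟨q '' (T'.1.neighborSet u \ {v}),
        SimpleGraph.image_neighborSet_subset h T'.2.2.2⟩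
      invFun B := ⟨T.splitVertex q u v huv B, hsplit B, .inl rfl,
        SimpleGraph.contract_splitVertex huv h hq⟩
      left_inv T' := Subtype.ext <| .symm <| T'.2.1.eq_of_le (hsplit _).isAcyclic <|
        SimpleGraph.le_splitVertex h huv T'.2.1.isAcyclic T'.2.2.1 T'.2.2.2
      right_inv B := Subtype.ext (SimpleGraph.image_neighborSet_splitVertex huv h hq B.2) }
  exact (Nat.card_congr preimages).trans ((Nat.card_coe_set_eq _).trans (Set.ncard_powerset _))

/-- A spanning tree `T` of `K_n` has exactly `2 ^ (degree of `s_e = q u` in `T`)`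
preimages among the spanning trees of `K_{n+1}` containing the edge `e = s(u,v)`, under the
contraction map `c_e`. -/
theorem card_preimages_of_contraction (n : ℕ) (hn : 1 ≤ n)
    (u v : Fin (n + 1)) (huv : u ≠ v)
    (q : Fin (n + 1) → Fin n) (hq : Function.Surjective q) (hquv : q u = q v)
    (hinj : ∀ x y : Fin (n + 1), q x = q y → x = y ∨ s(x, y) = s(u, v))
    (T : SimpleGraph (Fin n)) (hT : T.IsTree) :
    Nat.card {T' : SimpleGraph (Fin (n + 1)) //
        T'.IsTree ∧ s(u, v) ∈ T'.edgeSet ∧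
        SimpleGraph.fromEdgeSet (Sym2.map q '' (T'.edgeSet \ {s(u, v)})) = T} =
      2 ^ Set.ncard {w : Fin n | T.Adj (q u) w} :=
  card_preimages_of_contraction_general n u v huv q hq hquv hinj T hT
end

section
/- Let n ≥ 1, let e be an edge of the complete graph K_{n+1} with endpoints u ≠ v, let s_e be the corresponding vertex of K_n, and let g be an edge of K_n. If s_e is an endpoint of g, then g has exactly two preimage edges under the contraction map c_e (among edges of K_{n+1} different from e); if s_e is not an endpoint of g, then g has exactly one preimage edge under c_e. -/
section Aux

variable {n : ℕ} {u v : Fin (n + 1)} {q : Fin (n + 1) → Fin n}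

lemma aux_fib1 (huv : u ≠ v) (hquv : q u = q v)
    (hinj : ∀ x y : Fin (n + 1), q x = q y → x = y ∨ s(x, y) = s(u, v))
    {p : Fin n → Fin (n + 1)} (hp : ∀ w, q (p w) = w)
    (x : Fin (n + 1)) (w : Fin n) (hxw : q x = w) (hwu : w ≠ q u) : x = p w := by
  rcases hinj x (p w) (by rw [hxw, hp]) with h | h
  · exact h
  · exfalso
    rw [Sym2.eq_iff] at h
    rcases h with ⟨h1, h2⟩ | ⟨h1, h2⟩
    · exact hwu (by rw [← hp w, h2, ← hquv])
    · exact hwu (by rw [← hp w, h2])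

lemma aux_fib2 (huv : u ≠ v)
    (hinj : ∀ x y : Fin (n + 1), q x = q y → x = y ∨ s(x, y) = s(u, v))
    (x : Fin (n + 1)) (hx : q x = q u) : x = u ∨ x = v := by
  rcases hinj x u hx with h | h
  · exact Or.inl h
  · rw [Sym2.eq_iff] at h
    rcases h with ⟨h1, h2⟩ | ⟨h1, h2⟩
    · exact Or.inl h1
    · exact Or.inr h1

lemma aux_two (huv : u ≠ v) (hq : Function.Surjective q) (hquv : q u = q v)
    (hinj : ∀ x y : Fin (n + 1), q x = q y → x = y ∨ s(x, y) = s(u, v))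
    (a b : Fin n) (hab : a ≠ b) (ha : q u = a) :
    Set.ncard {f : Sym2 (Fin (n + 1)) |
        ¬ f.IsDiag ∧ f ≠ s(u, v) ∧ Sym2.map q f = s(a, b)} = 2 := by
  obtain ⟨p, hp⟩ := hq.hasRightInverse
  have hbu : b ≠ q u := fun h => hab (by rw [ha] at h; exact h.symm)
  have hqpb : q (p b) = b := hp b
  have hupb : u ≠ p b := fun h => hbu (by rw [← hqpb, ← h])
  have hvpb : v ≠ p b := fun h => hbu (by rw [← hqpb, ← h, ← hquv])
  have hset : {f : Sym2 (Fin (n + 1)) |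
        ¬ f.IsDiag ∧ f ≠ s(u, v) ∧ Sym2.map q f = s(a, b)} =
      {s(u, p b), s(v, p b)} := by
    ext f
    induction f using Sym2.ind with
    | _ x y =>
      simp only [Set.mem_setOf_eq, Set.mem_insert_iff, Set.mem_singleton_iff,
        Sym2.mk_isDiag_iff, Sym2.map_pair_eq]
      constructor
      · rintro ⟨hd, hne, hmap⟩
        rw [Sym2.eq_iff] at hmap
        rcases hmap with ⟨h1, h2⟩ | ⟨h1, h2⟩
        · have hy : y = p b := aux_fib1 huv hquv hinj hp y b h2 hbu
          rcases aux_fib2 huv hinj x (by rw [h1, ha]) with hx | hx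
          · exact Or.inl (by rw [hx, hy])
          · exact Or.inr (by rw [hx, hy])
        · have hx : x = p b := aux_fib1 huv hquv hinj hp x b h1 hbu
          rcases aux_fib2 huv hinj y (by rw [h2, ha]) with hy | hy
          · exact Or.inl (by rw [hx, hy, Sym2.eq_swap])
          · exact Or.inr (by rw [hx, hy, Sym2.eq_swap])
      · rintro (h | h) <;> rw [Sym2.eq_iff] at h
        · rcases h with ⟨h1, h2⟩ | ⟨h1, h2⟩
          · subst h1; subst h2
            refine ⟨hupb, ?_, by rw [hqpb, ha]⟩
            intro hc
            rw [Sym2.eq_iff] at hc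
            rcases hc with ⟨_, hc2⟩ | ⟨hc1, _⟩
            · exact hvpb hc2.symm
            · exact huv hc1
          · subst h1; subst h2
            refine ⟨fun h => hupb h.symm, ?_, by rw [hqpb, ha, Sym2.eq_swap]⟩
            intro hc
            rw [Sym2.eq_iff] at hc
            rcases hc with ⟨hc1, hc2⟩ | ⟨hc1, hc2⟩
            · exact hupb hc1.symm
            · exact hvpb hc1.symm
        · rcases h with ⟨h1, h2⟩ | ⟨h1, h2⟩
          · subst h1; subst h2
            refine ⟨fun h => hvpb h, ?_, by rw [hqpb, ← hquv, ha]⟩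
            intro hc
            rw [Sym2.eq_iff] at hc
            rcases hc with ⟨hc1, hc2⟩ | ⟨hc1, hc2⟩
            · exact huv hc1.symm
            · exact hupb hc2.symm
          · subst h1; subst h2
            refine ⟨fun h => hvpb h.symm, ?_, by rw [hqpb, ← hquv, ha, Sym2.eq_swap]⟩
            intro hc
            rw [Sym2.eq_iff] at hc
            rcases hc with ⟨hc1, hc2⟩ | ⟨hc1, hc2⟩
            · exact hupb hc1.symm
            · exact hvpb hc1.symm
  rw [hset]
  apply Set.ncard_pair
  intro hc
  rw [Sym2.eq_iff] at hc
  rcases hc with ⟨hc1, _⟩ | ⟨hc1, hc2⟩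
  · exact huv hc1
  · exact huv (hc1.trans hc2)

lemma aux_one (huv : u ≠ v) (hq : Function.Surjective q) (hquv : q u = q v)
    (hinj : ∀ x y : Fin (n + 1), q x = q y → x = y ∨ s(x, y) = s(u, v))
    (a b : Fin n) (hab : a ≠ b) (ha : q u ≠ a) (hb : q u ≠ b) :
    Set.ncard {f : Sym2 (Fin (n + 1)) |
        ¬ f.IsDiag ∧ f ≠ s(u, v) ∧ Sym2.map q f = s(a, b)} = 1 := by
  obtain ⟨p, hp⟩ := hq.hasRightInverse
  have hau : a ≠ q u := fun h => ha h.symm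
  have hbu : b ≠ q u := fun h => hb h.symm
  have hqpa : q (p a) = a := hp a
  have hqpb : q (p b) = b := hp b
  have hset : {f : Sym2 (Fin (n + 1)) |
        ¬ f.IsDiag ∧ f ≠ s(u, v) ∧ Sym2.map q f = s(a, b)} = {s(p a, p b)} := by
    ext f
    induction f using Sym2.ind with
    | _ x y =>
      simp only [Set.mem_setOf_eq, Set.mem_singleton_iff,
        Sym2.mk_isDiag_iff, Sym2.map_pair_eq]
      constructor
      · rintro ⟨hd, hne, hmap⟩
        rw [Sym2.eq_iff] at hmap
        rcases hmap with ⟨h1, h2⟩ | ⟨h1, h2⟩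
        · rw [aux_fib1 huv hquv hinj hp x a h1 hau,
            aux_fib1 huv hquv hinj hp y b h2 hbu]
        · rw [aux_fib1 huv hquv hinj hp x b h1 hbu,
            aux_fib1 huv hquv hinj hp y a h2 hau, Sym2.eq_swap]
      · intro h
        have hpane : p a ≠ u := fun hc => ha (by rw [← hc, hqpa])
        have hpanev : p a ≠ v := fun hc => ha (by rw [hquv, ← hc, hqpa])
        have hpbne : p b ≠ u := fun hc => hb (by rw [← hc, hqpb])
        have hpbnev : p b ≠ v := fun hc => hb (by rw [hquv, ← hc, hqpb])
        rw [Sym2.eq_iff] at h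
        rcases h with ⟨h1, h2⟩ | ⟨h1, h2⟩
        · subst h1; subst h2
          refine ⟨fun hc => hab (by rw [← hqpa, ← hqpb, hc]), ?_, by rw [hqpa, hqpb]⟩
          intro hc
          rw [Sym2.eq_iff] at hc
          rcases hc with ⟨hc1, _⟩ | ⟨hc1, _⟩
          · exact hpane hc1
          · exact hpanev hc1
        · subst h1; subst h2
          refine ⟨fun hc => hab (by rw [← hqpa, ← hqpb, hc]), ?_,
            by rw [hqpa, hqpb, Sym2.eq_swap]⟩
          intro hc
          rw [Sym2.eq_iff] at hc
          rcases hc with ⟨hc1, hc2⟩ | ⟨hc1, hc2⟩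
          · exact hpbne hc1
          · exact hpane hc2
  rw [hset, Set.ncard_singleton]

end Aux

/-- An edge `g` of `K_n` has exactly two preimage edges under the contraction map
`c_e` (among edges of `K_{n+1}` different from `e = s(u,v)`) when the special vertex
`s_e = q u` is an endpoint of `g`, and exactly one preimage edge otherwise. -/
theorem card_edge_preimages_of_contraction (n : ℕ) (hn : 1 ≤ n)
    (u v : Fin (n + 1)) (huv : u ≠ v)
    (q : Fin (n + 1) → Fin n) (hq : Function.Surjective q) (hquv : q u = q v)
    (hinj : ∀ x y : Fin (n + 1), q x = q y → x = y ∨ s(x, y) = s(u, v))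
    (g : Sym2 (Fin n)) (hg : ¬ g.IsDiag) :
    (q u ∈ g →
      Set.ncard {f : Sym2 (Fin (n + 1)) |
        ¬ f.IsDiag ∧ f ≠ s(u, v) ∧ Sym2.map q f = g} = 2) ∧
    (q u ∉ g →
      Set.ncard {f : Sym2 (Fin (n + 1)) |
        ¬ f.IsDiag ∧ f ≠ s(u, v) ∧ Sym2.map q f = g} = 1) := by
  induction g using Sym2.ind with
  | _ a b =>
    rw [Sym2.mk_isDiag_iff] at hg
    constructor
    · intro hmem
      rw [Sym2.mem_iff] at hmem
      rcases hmem with h | h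
      · exact aux_two huv hq hquv hinj a b hg h
      · rw [show (s(a, b) : Sym2 (Fin n)) = s(b, a) from Sym2.eq_swap]
        exact aux_two huv hq hquv hinj b a (Ne.symm hg) h
    · intro hmem
      rw [Sym2.mem_iff] at hmem
      push_neg at hmem
      exact aux_one huv hq hquv hinj a b hg hmem.1 hmem.2
end

section
/- Let A be a commutative ring, let n ≥ 1, let a be a function assigning an element a_f ∈ A to each edge f of the complete graph K_{n+1}, and let e_0 be an edge of K_{n+1}. Then Φ_{n+1}(a + 1_{e_0}) − Φ_{n+1}(a) = Φ_n((c_{e_0})_* a), where 1_{e_0} is the function equal to 1 on e_0 and 0 on every other edge. -/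
/-- The product `T_*(a) = ∏_{f edge of T} a_f` associated to a (spanning sub)graph `T`
of the complete graph on `Fin n` and a function `a` on edges. -/
noncomputable def treeProd {n : ℕ} {A : Type*} [CommRing A]
    (T : SimpleGraph (Fin n)) (a : Sym2 (Fin n) → A) : A :=
  ∏ᶠ f ∈ T.edgeSet, a f

/-- The `n`-th forested form `Φ_n(a) = Σ_{T spanning tree of K_n} T_*(a)`. -/
noncomputable def forestedForm (n : ℕ) {A : Type*} [CommRing A]
    (a : Sym2 (Fin n) → A) : A :=
  ∑ᶠ (T : SimpleGraph (Fin n)) (_ : T.IsTree), treeProd T a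

/-- The pushforward `(c_{e₀})_* a`: the value on an edge `g` of `K_n` is the sum of `a_f`
over the edges `f ≠ e₀` of `K_{n+1}` contracting onto `g`. -/
noncomputable def pushforward {n : ℕ} {A : Type*} [CommRing A]
    (q : Fin (n + 1) → Fin n) (e₀ : Sym2 (Fin (n + 1)))
    (a : Sym2 (Fin (n + 1)) → A) : Sym2 (Fin n) → A :=
  fun g => ∑ᶠ f ∈ {f : Sym2 (Fin (n + 1)) | ¬ f.IsDiag ∧ f ≠ e₀ ∧ Sym2.map q f = g}, a f

/-- The function `1_{e₀}`, equal to `1` on the edge `e₀` and `0` elsewhere. -/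
def edgeIndicator {n : ℕ} {A : Type*} [CommRing A] (e₀ : Sym2 (Fin n)) :
    Sym2 (Fin n) → A :=
  fun f => if f = e₀ then 1 else 0

/-!
Expanding `Φ` multilinearly, `Φ_{n+1}(a + 1_{e₀}) - Φ_{n+1}(a)` is the sum of `∏_{f ∈ S} a_f` over
the edge sets `S = T ∖ {e₀}` of the spanning trees `T ∋ e₀`. Contracting `e₀` maps such an `S`
bijectively onto the edge set of a spanning tree `T'` of `K_n`, and conversely every `S ∌ e₀` that
`q` maps bijectively onto the edges of a spanning tree `T'` completes, with `e₀`, to a spanning tree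
of `K_{n+1}` (connectivity lifts through the contracted edge, and the edge count is right). These
`S` are exactly the monomials of `∏_{g ∈ T'} ((c_{e₀})_* a)_g = ∏_{g ∈ T'} ∑_{f ↦ g} a_f`.
-/

open Finset

open Classical in
theorem Finset.prod_sum_filter_eq_sum_bijOn {ι κ R : Type*} [CommSemiring R] [DecidableEq ι]
    [DecidableEq κ] (φ : ι → κ) (s : Finset ι) (t : Finset κ) (a : ι → R) :
    ∏ g ∈ t, ∑ f ∈ s with φ f = g, a f =
      ∑ S ∈ s.powerset.filter (fun S : Finset ι => Set.BijOn φ ↑S ↑t), ∏ f ∈ S, a f := by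
  induction t using Finset.induction_on with
  | empty => simp [Finset.filter_eq', Set.bijOn_empty_iff_left]
  | insert g t hg ih =>
    rw [prod_insert hg, ih, sum_mul_sum, ← sum_product']
    have not_mem {f : ι} {S : Finset ι} (hf : φ f = g) (hS : Set.BijOn φ ↑S ↑t) : f ∉ S :=
      fun hfS => hg (hf ▸ hS.mapsTo hfS)
    refine sum_bij (fun p _ => insert p.1 p.2) ?_ ?_ ?_ ?_
    · rintro ⟨f, S⟩ hfS
      simp only [mem_product, mem_filter, mem_powerset] at hfS ⊢
      obtain ⟨⟨hf, rfl⟩, hSs, hS⟩ := hfS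
      exact ⟨insert_subset hf hSs, by simpa using hS.insert hg⟩
    · rintro ⟨f₁, S₁⟩ h₁ ⟨f₂, S₂⟩ h₂ heq
      simp only [mem_product, mem_filter, mem_powerset] at h₁ h₂
      have hf₁ := not_mem h₁.1.2 h₁.2.2
      have hf₂ := not_mem h₂.1.2 h₂.2.2
      have : f₁ = f₂ := by
        have := heq ▸ mem_insert_self f₁ S₁
        exact (mem_insert.1 this).resolve_right (not_mem h₁.1.2 h₂.2.2)
      subst this
      rw [← erase_insert hf₁, ← erase_insert hf₂, heq]
    · intro S' hS'
      simp only [mem_filter, mem_powerset] at hS'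
      obtain ⟨f, hfS', hf⟩ := hS'.2.surjOn (mem_coe.2 (mem_insert_self g t))
      refine ⟨(f, S'.erase f), ?_, insert_erase hfS'⟩
      simp only [mem_product, mem_filter, mem_powerset]
      refine ⟨⟨hS'.1 hfS', hf⟩, (erase_subset f S').trans hS'.1, ?_⟩
      have := hS'.2.sdiff_singleton hfS'
      rwa [hf, coe_insert, Set.insert_sdiff_self_of_notMem (mem_coe.not.2 hg), ← coe_erase] at this
    · rintro ⟨f, S⟩ hfS
      simp only [mem_product, mem_filter, mem_powerset] at hfS
      rw [prod_insert (not_mem hfS.1.2 hfS.2.2)]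

theorem Finset.prod_update_add_one_sub_prod {ι R : Type*} [CommRing R] [DecidableEq ι]
    (s : Finset ι) (a : ι → R) (i : ι) :
    ∏ j ∈ s, Function.update a i (a i + 1) j - ∏ j ∈ s, a j =
      if i ∈ s then ∏ j ∈ s.erase i, a j else 0 := by
  split_ifs with h
  · rw [prod_update_of_mem h, ← mul_prod_erase s a h, sdiff_singleton_eq_erase]
    ring
  · rw [prod_update_of_notMem h, sub_self]

namespace SimpleGraph

variable {V W : Type*} {G : SimpleGraph V} {H : SimpleGraph W} {f : V → W}

theorem Reachable.map_of_forall_adj (hf : ∀ x y, G.Adj x y → H.Reachable (f x) (f y))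
    {x y : V} (h : G.Reachable x y) : H.Reachable (f x) (f y) := by
  rw [reachable_iff_reflTransGen] at h ⊢
  exact Relation.ReflTransGen.lift' f
    (fun x y hxy => (reachable_iff_reflTransGen _ _).1 (hf x y hxy)) _ _ h

theorem Reachable.of_map (hfib : ∀ x y, f x = f y → G.Reachable x y)
    (hlift : ∀ x' y', H.Adj x' y' → ∃ x y, f x = x' ∧ f y = y' ∧ G.Adj x y)
    {x y : V} (h : H.Reachable (f x) (f y)) : G.Reachable x y := by
  rw [reachable_iff_reflTransGen] at h
  suffices ∀ y', Relation.ReflTransGen H.Adj (f x) y' → ∀ y, f y = y' → G.Reachable x y from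
    this _ h y rfl
  intro y' h'
  induction h' with
  | refl => exact fun y hy => hfib x y hy.symm
  | tail _ hadj ih =>
    intro z hz
    obtain ⟨b, c, rfl, rfl, hbc⟩ := hlift _ _ hadj
    exact (ih b rfl).trans (hbc.reachable.trans (hfib c z hz.symm))

theorem IsAcyclic.not_adj_of_adj_of_adj (hG : G.IsAcyclic) {x y z : V} (hxy : G.Adj x y)
    (hxz : G.Adj x z) : ¬ G.Adj y z := by
  classical
  exact fun hyz => hG.cliqueFree le_rfl {x, y, z} (is3Clique_triple_iff.2 ⟨hxy, hxz, hyz⟩)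

theorem edgeSet_fromEdgeSet_of_forall_not_isDiag {s : Set (Sym2 V)} (hs : ∀ e ∈ s, ¬ e.IsDiag) :
    (fromEdgeSet s).edgeSet = s := by
  rw [edgeSet_fromEdgeSet]
  exact sdiff_eq_left.2 (Set.disjoint_left.2 fun e he => hs e he)

section Contraction

variable {q : V → W} {u v : V} {S : Set (Sym2 V)}

theorem adj_fromEdgeSet_insert_of_map_eq
    (hinj : ∀ x y, q x = q y → x = y ∨ s(x, y) = s(u, v)) {x y : V} (hxy : q x = q y)
    (hne : x ≠ y) : (fromEdgeSet (insert s(u, v) S)).Adj x y :=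
  (fromEdgeSet_adj _).2 ⟨Or.inl ((hinj x y hxy).resolve_left hne), hne⟩

theorem adj_fromEdgeSet_insert_of_mem {x y : V} (hS : ∀ f ∈ S, ¬ f.IsDiag) (h : s(x, y) ∈ S) :
    (fromEdgeSet (insert s(u, v) S)).Adj x y :=
  (fromEdgeSet_adj _).2 ⟨Or.inr h, fun hxy => hS _ h (Sym2.mk_isDiag_iff.2 hxy)⟩

theorem not_isDiag_map (hinj : ∀ x y, q x = q y → x = y ∨ s(x, y) = s(u, v)) {f : Sym2 V}
    (hf : ¬ f.IsDiag) (hfe : f ≠ s(u, v)) : ¬ (f.map q).IsDiag := by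
  induction f with
  | h x y =>
    rw [Sym2.map_mk, Sym2.mk_isDiag_iff]
    intro hxy
    rcases hinj x y hxy with h | h
    · exact hf (Sym2.mk_isDiag_iff.2 h)
    · exact hfe h

theorem edgeSet_fromEdgeSet_insert (huv : u ≠ v) (hS : ∀ f ∈ S, ¬ f.IsDiag) :
    (fromEdgeSet (insert s(u, v) S)).edgeSet = insert s(u, v) S :=
  edgeSet_fromEdgeSet_of_forall_not_isDiag <| Set.forall_mem_insert.2
    ⟨Sym2.mk_isDiag_iff.not.2 huv, hS⟩

theorem nat_card_edgeSet_fromEdgeSet_insert [Finite V] (huv : u ≠ v) (hS : ∀ f ∈ S, ¬ f.IsDiag)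
    (huvS : s(u, v) ∉ S) : Nat.card (fromEdgeSet (insert s(u, v) S)).edgeSet = Nat.card S + 1 := by
  rw [edgeSet_fromEdgeSet_insert huv hS, Nat.card_coe_set_eq, Nat.card_coe_set_eq,
    Set.ncard_insert_of_notMem huvS]

theorem injOn_map_of_isAcyclic (hinj : ∀ x y, q x = q y → x = y ∨ s(x, y) = s(u, v))
    (hS : ∀ f ∈ S, ¬ f.IsDiag) (huvS : s(u, v) ∉ S)
    (hG : (fromEdgeSet (insert s(u, v) S)).IsAcyclic) : Set.InjOn (Sym2.map q) S := by
  -- Endpoints with the same image are joined by `s(u, v)`, so two distinct edges with the same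
  -- image would close a triangle.
  have key {x y x' y' : V} (h : s(x, y) ∈ S) (h' : s(x', y') ∈ S) (hx : q x = q x')
      (hy : q y = q y') : s(x, y) = s(x', y') := by
    have adj {a b : V} (hab : s(a, b) ∈ S) := adj_fromEdgeSet_insert_of_mem (u := u) (v := v) hS hab
    have adj_fib {a b : V} (hab : q a = q b) (hne : a ≠ b) :=
      adj_fromEdgeSet_insert_of_map_eq (S := S) hinj hab hne
    rcases eq_or_ne x x' with rfl | hxx
    · rcases eq_or_ne y y' with rfl | hyy
      · rfl
      · exact (hG.not_adj_of_adj_of_adj (adj h) (adj h') (adj_fib hy hyy)).elim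
    rcases eq_or_ne y y' with rfl | hyy
    · exact (hG.not_adj_of_adj_of_adj (adj h).symm (adj h').symm (adj_fib hx hxx)).elim
    -- both `{x, x'}` and `{y, y'}` are the contracted edge
    have hxe := (hinj x x' hx).resolve_left hxx
    rcases Sym2.eq_iff.1 (hxe.trans ((hinj y y' hy).resolve_left hyy).symm) with ⟨rfl, -⟩ | ⟨-, rfl⟩
    · exact (hS _ h (Sym2.mk_isDiag_iff.2 rfl)).elim
    · exact (huvS (hxe ▸ h)).elim
  intro f hf f' hf' hff'
  induction f with
  | h x y =>
    induction f' with
    | h x' y' =>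
      rw [Sym2.map_mk, Sym2.map_mk, Sym2.eq_iff] at hff'
      rcases hff' with ⟨hx, hy⟩ | ⟨hx, hy⟩
      · exact key hf hf' hx hy
      · exact (key hf (Sym2.eq_swap ▸ hf') hx hy).trans Sym2.eq_swap

theorem edgeSet_fromEdgeSet_image_map (hinj : ∀ x y, q x = q y → x = y ∨ s(x, y) = s(u, v))
    (hS : ∀ f ∈ S, ¬ f.IsDiag) (huvS : s(u, v) ∉ S) :
    (fromEdgeSet (Sym2.map q '' S)).edgeSet = Sym2.map q '' S := by
  refine edgeSet_fromEdgeSet_of_forall_not_isDiag ?_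
  rintro _ ⟨f, hf, rfl⟩
  exact not_isDiag_map hinj (hS f hf) (ne_of_mem_of_not_mem hf huvS)

theorem isTree_fromEdgeSet_image [Finite V] [Finite W] (hq : Function.Surjective q)
    (hquv : q u = q v) (hinj : ∀ x y, q x = q y → x = y ∨ s(x, y) = s(u, v))
    (hcard : Nat.card V = Nat.card W + 1) (huv : u ≠ v) (hS : ∀ f ∈ S, ¬ f.IsDiag)
    (huvS : s(u, v) ∉ S) (hG : (fromEdgeSet (insert s(u, v) S)).IsTree) :
    (fromEdgeSet (Sym2.map q '' S)).IsTree := by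
  have : Nonempty W := ⟨q u⟩
  have hreach {x y : V} (hxy : (fromEdgeSet (insert s(u, v) S)).Adj x y) :
      (fromEdgeSet (Sym2.map q '' S)).Reachable (q x) (q y) := by
    by_cases hq' : q x = q y
    · exact hq' ▸ Reachable.refl _
    obtain ⟨hxy | hxy, -⟩ := (fromEdgeSet_adj _).1 hxy
    · rcases Sym2.eq_iff.1 hxy with ⟨rfl, rfl⟩ | ⟨rfl, rfl⟩
      · exact (hq' hquv).elim
      · exact (hq' hquv.symm).elim
    · exact ((fromEdgeSet_adj _).2 ⟨Set.mem_image_of_mem (Sym2.map q) hxy, hq'⟩).reachable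
  refine isTree_iff_connected_and_card.2 ⟨⟨fun x' y' => ?_⟩, ?_⟩
  · obtain ⟨x, rfl⟩ := hq x'
    obtain ⟨y, rfl⟩ := hq y'
    exact (hG.connected.preconnected x y).map_of_forall_adj fun _ _ => hreach
  · have hinjOn := injOn_map_of_isAcyclic hinj hS huvS hG.isAcyclic
    have hG_card := (isTree_iff_connected_and_card.1 hG).2
    rw [nat_card_edgeSet_fromEdgeSet_insert huv hS huvS] at hG_card
    rw [edgeSet_fromEdgeSet_image_map hinj hS huvS, Nat.card_image_of_injOn hinjOn]
    omega

theorem isTree_fromEdgeSet_insert [Finite V] [Finite W]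
    (hinj : ∀ x y, q x = q y → x = y ∨ s(x, y) = s(u, v))
    (hcard : Nat.card V = Nat.card W + 1) (huv : u ≠ v) (hS : ∀ f ∈ S, ¬ f.IsDiag)
    (huvS : s(u, v) ∉ S) {T : SimpleGraph W} (hT : T.IsTree)
    (hbij : Set.BijOn (Sym2.map q) S T.edgeSet) : (fromEdgeSet (insert s(u, v) S)).IsTree := by
  have : Nonempty V := ⟨u⟩
  have hfib (x y : V) (hxy : q x = q y) : (fromEdgeSet (insert s(u, v) S)).Reachable x y := by
    rcases eq_or_ne x y with rfl | hne
    · rfl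
    · exact (adj_fromEdgeSet_insert_of_map_eq hinj hxy hne).reachable
  have hlift (x' y' : W) (hxy : T.Adj x' y') :
      ∃ x y, q x = x' ∧ q y = y' ∧ (fromEdgeSet (insert s(u, v) S)).Adj x y := by
    obtain ⟨f, hf, hfxy⟩ := hbij.surjOn (show s(x', y') ∈ T.edgeSet from hxy)
    induction f with
    | h x y =>
      have hadj := adj_fromEdgeSet_insert_of_mem (u := u) (v := v) hS hf
      rcases Sym2.eq_iff.1 ((Sym2.map_mk q x y).symm.trans hfxy) with ⟨hx, hy⟩ | ⟨hx, hy⟩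
      · exact ⟨x, y, hx, hy, hadj⟩
      · exact ⟨y, x, hy, hx, hadj.symm⟩
  refine isTree_iff_connected_and_card.2 ⟨⟨fun x y => ?_⟩, ?_⟩
  · exact Reachable.of_map hfib hlift (hT.connected.preconnected (q x) (q y))
  · have hT_card := (isTree_iff_connected_and_card.1 hT).2
    rw [nat_card_edgeSet_fromEdgeSet_insert huv hS huvS, Nat.card_congr hbij.equiv]
    omega

theorem isTree_fromEdgeSet_insert_and_eq_iff [Finite V] [Finite W]
    (hinj : ∀ x y, q x = q y → x = y ∨ s(x, y) = s(u, v)) (hcard : Nat.card V = Nat.card W + 1)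
    (huv : u ≠ v) (hS : ∀ f ∈ S, ¬ f.IsDiag) (huvS : s(u, v) ∉ S) {T : SimpleGraph W}
    (hT : T.IsTree) :
    (fromEdgeSet (insert s(u, v) S)).IsTree ∧ fromEdgeSet (Sym2.map q '' S) = T ↔
      Set.BijOn (Sym2.map q) S T.edgeSet := by
  constructor
  · rintro ⟨hG, rfl⟩
    rw [edgeSet_fromEdgeSet_image_map hinj hS huvS]
    exact (injOn_map_of_isAcyclic hinj hS huvS hG.isAcyclic).bijOn_image
  · exact fun hbij => ⟨isTree_fromEdgeSet_insert hinj hcard huv hS huvS hT hbij,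
      by rw [hbij.image_eq, fromEdgeSet_edgeSet]⟩

open Classical in
theorem sum_isTree_erase_eq_sum_fromEdgeSet_insert [Fintype V] [DecidableEq V] {R : Type*}
    [AddCommMonoid R] (huv : u ≠ v) (F : Finset (Sym2 V) → R) :
    ∑ T : SimpleGraph V with T.IsTree ∧ s(u, v) ∈ T.edgeSet, F (T.edgeFinset.erase s(u, v)) =
      ∑ S ∈ ((⊤ : SimpleGraph V).edgeFinset.erase s(u, v)).powerset.filter
        (fun S : Finset (Sym2 V) => (fromEdgeSet (insert s(u, v) ↑S)).IsTree), F S := by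
  have hs {S : Finset (Sym2 V)} (hS : S ⊆ (⊤ : SimpleGraph V).edgeFinset.erase s(u, v)) :
      ∀ f ∈ (S : Set (Sym2 V)), ¬ f.IsDiag := fun f hf =>
    not_isDiag_of_mem_edgeFinset (mem_of_mem_erase (hS hf))
  have left_inv {T : SimpleGraph V} (hT : s(u, v) ∈ T.edgeSet) :
      fromEdgeSet (insert s(u, v) ↑(T.edgeFinset.erase s(u, v))) = T := by
    rw [coe_erase, coe_edgeFinset, Set.insert_sdiff_singleton, Set.insert_eq_of_mem hT,
      fromEdgeSet_edgeSet]
  have right_inv {S : Finset (Sym2 V)} (hS : S ⊆ (⊤ : SimpleGraph V).edgeFinset.erase s(u, v)) :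
      (fromEdgeSet (insert s(u, v) ↑S)).edgeFinset.erase s(u, v) = S := by
    rw [← coe_inj, coe_erase, coe_edgeFinset, edgeSet_fromEdgeSet_insert huv (hs hS),
      Set.insert_sdiff_self_of_notMem fun h => notMem_erase _ _ (hS h)]
  refine sum_nbij' (fun T => T.edgeFinset.erase s(u, v)) (fun S => fromEdgeSet (insert s(u, v) ↑S))
    ?_ ?_ ?_ ?_ fun _ _ => rfl
  · intro T hT
    simp only [mem_filter, mem_univ, true_and] at hT
    simp only [mem_filter, mem_powerset, left_inv hT.2]
    exact ⟨erase_subset_erase _ (edgeFinset_mono le_top), hT.1⟩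
  · intro S hS
    simp only [mem_filter, mem_powerset] at hS
    simp only [mem_filter, mem_univ, true_and, edgeSet_fromEdgeSet_insert huv (hs hS.1)]
    exact ⟨hS.2, Set.mem_insert _ _⟩
  · intro T hT
    exact left_inv (mem_filter.1 hT).2.2
  · intro S hS
    -- `right_inv` carries the `edgeFinset` instance of `fromEdgeSet` of a finset
    convert right_inv (mem_powerset.1 (mem_filter.1 hS).1)

open Classical in
theorem sum_fromEdgeSet_insert_isTree_eq_sum_prod_sum [Fintype V] [DecidableEq V] [Fintype W]
    [DecidableEq W] {R : Type*} [CommSemiring R] (hq : Function.Surjective q) (hquv : q u = q v)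
    (hinj : ∀ x y, q x = q y → x = y ∨ s(x, y) = s(u, v)) (hcard : Nat.card V = Nat.card W + 1)
    (huv : u ≠ v) (a : Sym2 V → R) :
    ∑ S ∈ ((⊤ : SimpleGraph V).edgeFinset.erase s(u, v)).powerset.filter
        (fun S : Finset (Sym2 V) => (fromEdgeSet (insert s(u, v) ↑S)).IsTree), ∏ f ∈ S, a f =
      ∑ T : SimpleGraph W with T.IsTree, ∏ g ∈ T.edgeFinset,
        ∑ f ∈ (⊤ : SimpleGraph V).edgeFinset.erase s(u, v) with f.map q = g, a f := by
  have hs {S : Finset (Sym2 V)} (hS : S ∈ ((⊤ : SimpleGraph V).edgeFinset.erase s(u, v)).powerset) :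
      (∀ f ∈ (S : Set (Sym2 V)), ¬ f.IsDiag) ∧ s(u, v) ∉ (S : Set (Sym2 V)) := by
    rw [mem_powerset] at hS
    exact ⟨fun f hf => not_isDiag_of_mem_edgeFinset (mem_of_mem_erase (hS hf)),
      fun h => notMem_erase _ _ (hS h)⟩
  simp_rw [prod_sum_filter_eq_sum_bijOn, coe_edgeFinset]
  refine (sum_fiberwise_of_maps_to (g := fun S : Finset (Sym2 V) => fromEdgeSet (Sym2.map q '' ↑S))
    (t := univ.filter IsTree) ?_ _).symm.trans ?_
  · intro S hS
    rw [mem_filter] at hS ⊢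
    exact ⟨mem_univ _, isTree_fromEdgeSet_image hq hquv hinj hcard huv (hs hS.1).1 (hs hS.1).2 hS.2⟩
  · refine sum_congr rfl fun T hT => sum_congr ?_ fun _ _ => rfl
    rw [filter_filter]
    exact filter_congr fun S hS => isTree_fromEdgeSet_insert_and_eq_iff hinj hcard huv
      (hs hS).1 (hs hS).2 (mem_filter.1 hT).2

end Contraction

end SimpleGraph

theorem treeProd_eq_prod_edgeFinset {n : ℕ} {A : Type*} [CommRing A] (T : SimpleGraph (Fin n))
    [Fintype T.edgeSet] (a : Sym2 (Fin n) → A) : treeProd T a = ∏ f ∈ T.edgeFinset, a f := by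
  rw [treeProd, ← SimpleGraph.coe_edgeFinset, finprod_mem_coe_finset]

open Classical in
theorem forestedForm_eq_sum (n : ℕ) {A : Type*} [CommRing A] (a : Sym2 (Fin n) → A) :
    forestedForm n a = ∑ T : SimpleGraph (Fin n) with T.IsTree, ∏ f ∈ T.edgeFinset, a f := by
  refine (finsum_cond_eq_sum_of_cond_iff _ fun _ => ?_).trans
    (sum_congr rfl fun T _ => treeProd_eq_prod_edgeFinset T a)
  simp

theorem pushforward_eq {n : ℕ} {A : Type*} [CommRing A] (q : Fin (n + 1) → Fin n)
    (e₀ : Sym2 (Fin (n + 1))) (a : Sym2 (Fin (n + 1)) → A) (g : Sym2 (Fin n)) :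
    pushforward q e₀ a g =
      ∑ f ∈ (⊤ : SimpleGraph (Fin (n + 1))).edgeFinset.erase e₀ with f.map q = g, a f :=
  finsum_cond_eq_sum_of_cond_iff _ fun _ => by
    simp only [Set.mem_ofPred_eq, mem_filter, mem_erase, SimpleGraph.mem_edgeFinset,
      SimpleGraph.edgeSet_top, Set.mem_compl_iff, Sym2.mem_diagSet]
    tauto

theorem add_edgeIndicator {n : ℕ} {A : Type*} [CommRing A] (a : Sym2 (Fin n) → A)
    (e₀ : Sym2 (Fin n)) : a + edgeIndicator e₀ = Function.update a e₀ (a e₀ + 1) := by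
  ext f
  by_cases h : f = e₀ <;> simp [edgeIndicator, h]

open Classical in
theorem forestedForm_add_edgeIndicator_sub {n : ℕ} {A : Type*} [CommRing A]
    (a : Sym2 (Fin n) → A) (e₀ : Sym2 (Fin n)) :
    forestedForm n (a + edgeIndicator e₀) - forestedForm n a =
      ∑ T : SimpleGraph (Fin n) with T.IsTree ∧ e₀ ∈ T.edgeSet,
        ∏ f ∈ T.edgeFinset.erase e₀, a f := by
  rw [forestedForm_eq_sum, forestedForm_eq_sum, ← sum_sub_distrib, add_edgeIndicator]
  simp_rw [prod_update_add_one_sub_prod, SimpleGraph.mem_edgeFinset]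
  rw [sum_ite, sum_const_zero, add_zero, filter_filter]

theorem forestedForm_add_indicator_sub_general {A : Type*} [CommRing A] (n : ℕ)
    (u v : Fin (n + 1)) (huv : u ≠ v)
    (q : Fin (n + 1) → Fin n) (hq : Function.Surjective q) (hquv : q u = q v)
    (hinj : ∀ x y : Fin (n + 1), q x = q y → x = y ∨ s(x, y) = s(u, v))
    (a : Sym2 (Fin (n + 1)) → A) :
    forestedForm (n + 1) (a + edgeIndicator s(u, v)) - forestedForm (n + 1) a =
      forestedForm n (pushforward q s(u, v) a) := by
  classical
  have hcard : Nat.card (Fin (n + 1)) = Nat.card (Fin n) + 1 := by simp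
  rw [forestedForm_add_edgeIndicator_sub,
    SimpleGraph.sum_isTree_erase_eq_sum_fromEdgeSet_insert huv fun S => ∏ f ∈ S, a f,
    SimpleGraph.sum_fromEdgeSet_insert_isTree_eq_sum_prod_sum hq hquv hinj hcard huv,
    forestedForm_eq_sum]
  simp_rw [pushforward_eq]

/-- key property of the forested forms:
`Φ_{n+1}(a + 1_{e₀}) − Φ_{n+1}(a) = Φ_n((c_{e₀})_* a)`. -/
theorem forestedForm_add_indicator_sub {A : Type*} [CommRing A] (n : ℕ) (hn : 1 ≤ n)
    (u v : Fin (n + 1)) (huv : u ≠ v)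
    (q : Fin (n + 1) → Fin n) (hq : Function.Surjective q) (hquv : q u = q v)
    (hinj : ∀ x y : Fin (n + 1), q x = q y → x = y ∨ s(x, y) = s(u, v))
    (a : Sym2 (Fin (n + 1)) → A) :
    forestedForm (n + 1) (a + edgeIndicator s(u, v)) - forestedForm (n + 1) a =
      forestedForm n (pushforward q s(u, v) a) :=
  forestedForm_add_indicator_sub_general n u v huv q hq hquv hinj a
end

section
/- Let A be a commutative ring, let n ≥ 1, let a be a function assigning an element a_f ∈ A to each edge f of the complete graph K_{n+1}, and let e_0 be an edge of K_{n+1}. For every spanning tree T of K_n, one has T_*((c_{e_0})_* a) = Σ_{T'} ( T'_*(a + 1_{e_0}) − T'_*(a) ), where the sum ranges over the spanning trees T' of K_{n+1} that contain e_0 and whose contracted image under c_{e_0} equals T (there are 2^{ν_T(s_{e_0})} of them). -/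
open SimpleGraph Set

section Contraction

variable {V W : Type*} {q : V → W} {u v : V} {G : SimpleGraph V} {H T : SimpleGraph W}

def contractionFiber (q : V → W) (e₀ : Sym2 V) (g : Sym2 W) : Set (Sym2 V) :=
  {f | ¬ f.IsDiag ∧ f ≠ e₀ ∧ Sym2.map q f = g}

def contraction (q : V → W) (e₀ : Sym2 V) (G : SimpleGraph V) : SimpleGraph W :=
  fromEdgeSet (Sym2.map q '' (G.edgeSet \ {e₀}))

def liftGraph {s : Set (Sym2 W)} (e₀ : Sym2 V) (p : s → Sym2 V) : SimpleGraph V :=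
  fromEdgeSet (insert e₀ (range p))

theorem SimpleGraph.Preconnected.of_edgeSet_subset_image (hH : H.Preconnected)
    (hfiber : ∀ x y, q x = q y → G.Reachable x y) (hlift : H.edgeSet ⊆ Sym2.map q '' G.edgeSet) :
    G.Preconnected := by
  have key : ∀ {a b} (w : H.Walk a b) (x y : V), q x = a → q y = b → G.Reachable x y := by
    intro a b w
    induction w with
    | nil => exact fun x y hx hy => hfiber x y (hx.trans hy.symm)
    | @cons a b c hab _ ih =>
      rintro x y rfl rfl
      obtain ⟨f, hf, hfab⟩ := hlift (H.mem_edgeSet.mpr hab)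
      induction f using Sym2.ind with
      | h x' y' =>
        rw [Sym2.map_mk, Sym2.eq_iff] at hfab
        rcases hfab with ⟨hx', hy'⟩ | ⟨hy', hx'⟩
        · exact (hfiber x x' hx'.symm).trans ((Adj.reachable hf).trans (ih y' y hy' rfl))
        · exact (hfiber x y' hx'.symm).trans ((Adj.reachable hf).symm.trans (ih x' y hy' rfl))
  exact fun x y => (hH (q x) (q y)).elim fun w => key w x y rfl rfl

theorem reachable_of_map_eq (he₀ : s(u, v) ∈ G.edgeSet)
    (hinj : ∀ x y, q x = q y → x = y ∨ s(x, y) = s(u, v)) {x y : V} (hxy : q x = q y) :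
    G.Reachable x y := by
  rcases hinj x y hxy with rfl | hxy
  · rfl
  · rcases Sym2.eq_iff.mp hxy with ⟨rfl, rfl⟩ | ⟨rfl, rfl⟩
    exacts [Adj.reachable he₀, (Adj.reachable he₀).symm]

theorem not_isDiag_map (hinj : ∀ x y, q x = q y → x = y ∨ s(x, y) = s(u, v))
    {f : Sym2 V} (hf : f ∈ G.edgeSet) (hfe₀ : f ≠ s(u, v)) : ¬ (Sym2.map q f).IsDiag := by
  induction f using Sym2.ind with
  | h x y =>
    rw [Sym2.map_mk, Sym2.mk_isDiag_iff]
    intro hxy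
    rcases hinj x y hxy with rfl | h
    exacts [G.not_isDiag_of_mem_edgeSet hf rfl, hfe₀ h]

theorem edgeSet_contraction (hinj : ∀ x y, q x = q y → x = y ∨ s(x, y) = s(u, v)) :
    (contraction q s(u, v) G).edgeSet = Sym2.map q '' (G.edgeSet \ {s(u, v)}) := by
  rw [contraction, edgeSet_fromEdgeSet, sdiff_eq_left, Set.disjoint_left]
  rintro _ ⟨f, hf, rfl⟩
  exact not_isDiag_map hinj hf.1 hf.2

theorem isTree_of_bijOn [Finite V] [Finite W] (hcard : Nat.card V = Nat.card W + 1)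
    (hinj : ∀ x y, q x = q y → x = y ∨ s(x, y) = s(u, v)) (hT : T.IsTree)
    (he₀ : s(u, v) ∈ G.edgeSet) (hbij : BijOn (Sym2.map q) (G.edgeSet \ {s(u, v)}) T.edgeSet) :
    G.IsTree := by
  rw [isTree_iff_connected_and_card] at hT ⊢
  have hlift : T.edgeSet ⊆ Sym2.map q '' G.edgeSet :=
    hbij.image_eq ▸ image_mono sdiff_subset
  refine ⟨(connected_iff G).mpr ⟨Preconnected.of_edgeSet_subset_image hT.1.preconnected
    (fun _ _ => reachable_of_map_eq he₀ hinj) hlift, ⟨u⟩⟩, ?_⟩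
  have hdiff := ncard_sdiff_singleton_add_one he₀ (toFinite _)
  have hTcard := hT.2
  rw [Nat.card_coe_set_eq, ← hbij.image_eq, hbij.injOn.ncard_image] at hTcard
  rw [Nat.card_coe_set_eq]
  omega

theorem bijOn_of_isTree [Finite V] [Finite W] (hcard : Nat.card V = Nat.card W + 1)
    (hinj : ∀ x y, q x = q y → x = y ∨ s(x, y) = s(u, v)) (hT : T.IsTree)
    (hG : G.IsTree) (he₀ : s(u, v) ∈ G.edgeSet) (hcontr : contraction q s(u, v) G = T) :
    BijOn (Sym2.map q) (G.edgeSet \ {s(u, v)}) T.edgeSet := by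
  have himage : Sym2.map q '' (G.edgeSet \ {s(u, v)}) = T.edgeSet :=
    hcontr ▸ (edgeSet_contraction hinj).symm
  refine himage ▸ InjOn.bijOn_image (injOn_of_ncard_image_eq ?_)
  have hdiff := ncard_sdiff_singleton_add_one he₀ (toFinite _)
  rw [isTree_iff_connected_and_card] at hT hG
  simp only [Nat.card_coe_set_eq] at hT hG
  rw [himage]
  omega

section Lift

variable {s : Set (Sym2 W)} {e₀ : Sym2 V} {p p' : s → Sym2 V}

theorem map_apply_of_mem_pi (hp : p ∈ univ.pi fun g : s => contractionFiber q e₀ g) (g : s) :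
    Sym2.map q (p g) = g :=
  (hp g (mem_univ g)).2.2

theorem injective_of_mem_pi (hp : p ∈ univ.pi fun g : s => contractionFiber q e₀ g) :
    Function.Injective p := fun g g' h =>
  Subtype.ext <| by rw [← map_apply_of_mem_pi hp g, h, map_apply_of_mem_pi hp g']

theorem bijOn_range_of_mem_pi (hp : p ∈ univ.pi fun g : s => contractionFiber q e₀ g) :
    BijOn (Sym2.map q) (range p) s := by
  refine ⟨?_, ?_, fun g hg => ⟨p ⟨g, hg⟩, mem_range_self _, map_apply_of_mem_pi hp _⟩⟩
  · rintro _ ⟨g, rfl⟩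
    exact (map_apply_of_mem_pi hp g).symm ▸ g.2
  · rintro _ ⟨g, rfl⟩ _ ⟨g', rfl⟩ h
    rw [map_apply_of_mem_pi hp, map_apply_of_mem_pi hp] at h
    rw [Subtype.ext h]

theorem edgeSet_liftGraph_sdiff (hp : p ∈ univ.pi fun g : s => contractionFiber q e₀ g) :
    (liftGraph e₀ p).edgeSet \ {e₀} = range p := by
  ext f
  simp only [liftGraph, edgeSet_fromEdgeSet, mem_sdiff, mem_insert_iff, mem_singleton_iff]
  constructor
  · rintro ⟨⟨rfl | hf, -⟩, hne⟩
    exacts [absurd rfl hne, hf]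
  · rintro ⟨g, rfl⟩
    have hfiber := hp g (mem_univ g)
    exact ⟨⟨Or.inr ⟨g, rfl⟩, hfiber.1⟩, hfiber.2.1⟩

theorem mem_edgeSet_liftGraph (he₀ : ¬ e₀.IsDiag) : e₀ ∈ (liftGraph e₀ p).edgeSet := by
  simp [liftGraph, he₀]

end Lift

theorem bijOn_liftGraph [Finite V] [Finite W] (hcard : Nat.card V = Nat.card W + 1) (huv : u ≠ v)
    (hinj : ∀ x y, q x = q y → x = y ∨ s(x, y) = s(u, v)) (hT : T.IsTree) :
    BijOn (liftGraph s(u, v)) (univ.pi fun g : T.edgeSet => contractionFiber q s(u, v) g)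
      {G | G.IsTree ∧ s(u, v) ∈ G.edgeSet ∧ contraction q s(u, v) G = T} := by
  have he₀ (p : T.edgeSet → Sym2 V) : s(u, v) ∈ (liftGraph s(u, v) p).edgeSet :=
    mem_edgeSet_liftGraph (by simpa using huv)
  refine ⟨fun p hp => ?_, fun p hp p' hp' h => ?_, fun G ⟨hG, hGe₀, hcontr⟩ => ?_⟩
  · have hbij := edgeSet_liftGraph_sdiff hp ▸ bijOn_range_of_mem_pi hp
    refine ⟨isTree_of_bijOn hcard hinj hT (he₀ p) hbij, he₀ p, ?_⟩
    rw [contraction, hbij.image_eq, fromEdgeSet_edgeSet]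
  · have hrange : range p = range p' := by
      rw [← edgeSet_liftGraph_sdiff hp, h, edgeSet_liftGraph_sdiff hp']
    funext g
    obtain ⟨g', hg'⟩ : p g ∈ range p' := hrange ▸ mem_range_self g
    obtain rfl : g' = g := Subtype.ext <| by
      rw [← map_apply_of_mem_pi hp' g', hg', map_apply_of_mem_pi hp g]
    exact hg'.symm
  · let e := (bijOn_of_isTree hcard hinj hT hG hGe₀ hcontr).equiv
    refine ⟨Subtype.val ∘ e.symm, fun g _ => ?_, ?_⟩
    · obtain ⟨hf, hne⟩ := (e.symm g).2
      exact ⟨G.not_isDiag_of_mem_edgeSet hf, hne, congrArg Subtype.val (e.apply_symm_apply g)⟩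
    · rw [liftGraph, e.symm.surjective.range_comp, Subtype.range_coe, insert_sdiff_singleton,
        insert_eq_of_mem hGe₀, fromEdgeSet_edgeSet]

end Contraction

section Products

variable {A : Type*} [CommRing A]

theorem treeProd_add_edgeIndicator_sub {m : ℕ} {G : SimpleGraph (Fin m)} {e₀ : Sym2 (Fin m)}
    (he₀ : e₀ ∈ G.edgeSet) (a : Sym2 (Fin m) → A) :
    treeProd G (a + edgeIndicator e₀) - treeProd G a = ∏ᶠ f ∈ G.edgeSet \ {e₀}, a f := by
  have hsplit (b : Sym2 (Fin m) → A) : treeProd G b = b e₀ * ∏ᶠ f ∈ G.edgeSet \ {e₀}, b f := by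
    rw [treeProd, ← finprod_mem_insert b (fun h => h.2 rfl) (toFinite _),
      insert_sdiff_singleton, insert_eq_of_mem he₀]
  have hrest : ∏ᶠ f ∈ G.edgeSet \ {e₀}, (a + edgeIndicator e₀ : Sym2 (Fin m) → A) f =
      ∏ᶠ f ∈ G.edgeSet \ {e₀}, a f :=
    finprod_mem_congr rfl fun f hf => by
      rw [Pi.add_apply, edgeIndicator, if_neg (mem_singleton_iff.not.mp hf.2), add_zero]
  rw [hsplit, hsplit, hrest, Pi.add_apply, edgeIndicator, if_pos rfl]
  ring

theorem treeProd_pushforward_eq_finsum {n : ℕ} (q : Fin (n + 1) → Fin n)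
    (e₀ : Sym2 (Fin (n + 1))) (a : Sym2 (Fin (n + 1)) → A) (T : SimpleGraph (Fin n)) :
    treeProd T (pushforward q e₀ a) =
      ∑ᶠ p ∈ univ.pi (fun g : T.edgeSet => contractionFiber q e₀ g), ∏ᶠ f ∈ range p, a f := by
  classical
  have hfiber (g : Sym2 (Fin n)) : pushforward q e₀ a g =
      ∑ f ∈ (toFinite (contractionFiber q e₀ g)).toFinset, a f :=
    finsum_mem_eq_finite_toFinset_sum a _
  rw [treeProd, ← finprod_set_coe_eq_finprod_mem, finprod_eq_prod_of_fintype]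
  simp_rw [hfiber, Finset.prod_univ_sum, ← finsum_mem_coe_finset, Fintype.coe_piFinset,
    Finite.coe_toFinset]
  refine finsum_mem_congr rfl fun p hp => ?_
  rw [finprod_mem_range (injective_of_mem_pi hp), finprod_eq_prod_of_fintype]

end Products

theorem treeProd_pushforward_eq_sum_over_preimages_general {A : Type*} [CommRing A]
    (n : ℕ)
    (u v : Fin (n + 1)) (huv : u ≠ v)
    (q : Fin (n + 1) → Fin n)
    (hinj : ∀ x y : Fin (n + 1), q x = q y → x = y ∨ s(x, y) = s(u, v))
    (a : Sym2 (Fin (n + 1)) → A)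
    (T : SimpleGraph (Fin n)) (hT : T.IsTree) :
    treeProd T (pushforward q s(u, v) a) =
      ∑ᶠ T' ∈ {T' : SimpleGraph (Fin (n + 1)) |
          T'.IsTree ∧ s(u, v) ∈ T'.edgeSet ∧
          SimpleGraph.fromEdgeSet (Sym2.map q '' (T'.edgeSet \ {s(u, v)})) = T},
        (treeProd T' (a + edgeIndicator s(u, v)) - treeProd T' a) := by
  rw [treeProd_pushforward_eq_finsum]
  refine finsum_mem_eq_of_bijOn _ (bijOn_liftGraph (by simp) huv hinj hT) fun p hp => ?_
  rw [treeProd_add_edgeIndicator_sub (mem_edgeSet_liftGraph (by simpa using huv)),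
    edgeSet_liftGraph_sdiff hp]

/-- for every spanning tree `T` of `K_n`,
`T_*((c_{e₀})_* a) = Σ_{T'} ( T'_*(a + 1_{e₀}) − T'_*(a) )`, the sum ranging over the
spanning trees `T'` of `K_{n+1}` containing `e₀ = s(u,v)` whose contracted image is `T`. -/
theorem treeProd_pushforward_eq_sum_over_preimages {A : Type*} [CommRing A]
    (n : ℕ) (hn : 1 ≤ n)
    (u v : Fin (n + 1)) (huv : u ≠ v)
    (q : Fin (n + 1) → Fin n) (hq : Function.Surjective q) (hquv : q u = q v)
    (hinj : ∀ x y : Fin (n + 1), q x = q y → x = y ∨ s(x, y) = s(u, v))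
    (a : Sym2 (Fin (n + 1)) → A)
    (T : SimpleGraph (Fin n)) (hT : T.IsTree) :
    treeProd T (pushforward q s(u, v) a) =
      ∑ᶠ T' ∈ {T' : SimpleGraph (Fin (n + 1)) |
          T'.IsTree ∧ s(u, v) ∈ T'.edgeSet ∧
          SimpleGraph.fromEdgeSet (Sym2.map q '' (T'.edgeSet \ {s(u, v)})) = T},
        (treeProd T' (a + edgeIndicator s(u, v)) - treeProd T' a) :=
  treeProd_pushforward_eq_sum_over_preimages_general n u v huv q hinj a T hT
end

section
/- For every n ≥ 2 and every vertex v of the complete graph K_n, Σ_{T spanning tree of K_n} 2^{deg_T(v)} = 2·(n+1)^{n−2}, where deg_T(v) denotes the degree of v in the tree T. Equivalently, this sum equals the number of spanning trees of K_{n+1} containing a fixed edge. -/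
/-!
Prüfer's bijection: if `V` has `n + 2` vertices, sequences `s : Fin n → V` correspond to the
trees on `V`, and `v` has degree `1 + #{i | s i = v}` in the tree of `s`. That tree is obtained
by decoding the tail of `s` on `V ∖ {l}`, for a vertex `l` not occurring in `s`, and attaching
`l` as a leaf to `s 0`. Hence
`∑_T 2 ^ deg_T v = 2 * ∑_s ∏_i (if s i = v then 2 else 1) = 2 * (n + 3) ^ n`.
-/

open Finset

universe u

lemma nonempty_compl_range_of_lt {V : Type*} {n : ℕ} (h : n < Nat.card V) (s : Fin n → V) :
    (Set.range s)ᶜ.Nonempty := by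
  rw [Set.nonempty_compl, Ne, Set.range_eq_univ]
  intro hs
  have := Nat.card_le_card_of_surjective s hs
  rw [Nat.card_fin] at this
  omega

lemma Nat.card_compl_singleton {V : Type*} {n : ℕ} (hV : Nat.card V = n + 1) (l : V) :
    Nat.card ({l}ᶜ : Set V) = n := by
  have : Finite V := Nat.finite_of_card_ne_zero (by omega)
  rw [Nat.card_coe_set_eq]
  exact Set.ncard_compl_of_ncard_eq_add _ (by rw [Set.ncard_singleton, hV])

lemma Fintype.sum_pow_card_filter_eq {V R : Type*} [Fintype V] [DecidableEq V] [CommSemiring R]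
    (a : R) (m : ℕ) (v : V) :
    ∑ s : Fin m → V, a ^ #{i | s i = v} = (a + (Fintype.card V - 1 : ℕ)) ^ m := by
  have hprod (s : Fin m → V) : a ^ #{i | s i = v} = ∏ i, if s i = v then a else 1 := by
    rw [prod_ite, prod_const, prod_const, one_pow, mul_one]
  have hsum : ∑ x : V, (if x = v then a else 1) = a + (Fintype.card V - 1 : ℕ) := by
    rw [sum_ite, filter_eq', filter_ne', if_pos (mem_univ v), sum_singleton, sum_const,
      card_erase_of_mem (mem_univ v), card_univ, nsmul_one]
  rw [← hsum, Fintype.sum_pow]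
  exact Finset.sum_congr rfl fun s _ => hprod s

namespace SimpleGraph

variable {V : Type*}

lemma Walk.IsCycle.notMem_support_of_subsingleton_neighborSet {G : SimpleGraph V} {u x : V}
    {c : G.Walk u u} (hc : c.IsCycle) (hx : (G.neighborSet x).Subsingleton) :
    x ∉ c.support := by
  classical
  intro hxc
  have hrot := hc.rotate hxc
  exact hrot.snd_ne_penultimate <|
    hx (Walk.adj_snd hrot.not_nil) (Walk.adj_penultimate hrot.not_nil).symm

lemma IsAcyclic.of_induce_compl_singleton {G : SimpleGraph V} {x : V}
    (hx : (G.neighborSet x).Subsingleton) (h : (G.induce {x}ᶜ).IsAcyclic) : G.IsAcyclic := by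
  intro u c hc
  have hsupp : ∀ y ∈ c.support, y ∈ ({x}ᶜ : Set V) := fun y hy hyx =>
    hc.notMem_support_of_subsingleton_neighborSet hx (hyx ▸ hy)
  refine h (c.induce _ hsupp) ?_
  rwa [← Walk.isCycle_map_iff_of_injective (f := (Embedding.induce _).toHom)
    Subtype.val_injective, Walk.map_induce]

lemma IsTree.exists_ncard_neighborSet_eq_one [Finite V] [Nontrivial V] {T : SimpleGraph V}
    (hT : T.IsTree) : ∃ v, (T.neighborSet v).ncard = 1 := by
  have := Fintype.ofFinite V
  classical
  obtain ⟨v, hv⟩ := hT.exists_vert_degree_one_of_nontrivial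
  refine ⟨v, ?_⟩
  rw [← Nat.card_coe_set_eq, Nat.card_eq_fintype_card, card_neighborSet_eq_degree, hv]

lemma Preconnected.exists_neighborSet_eq_singleton [Finite V] [Nontrivial V]
    {G : SimpleGraph V} (hG : G.Preconnected) {v : V} (hv : (G.neighborSet v).ncard < 2) :
    ∃ w, G.neighborSet v = {w} := by
  have hpos : 0 < (G.neighborSet v).ncard :=
    (Set.ncard_pos).mpr <| (G.neighborSet_nonempty).mpr (hG.not_isIsolated v)
  exact Set.ncard_eq_one.mp (by omega)

lemma IsTree.eq_top_of_card_eq_two {T : SimpleGraph V} (hT : T.IsTree) (hV : Nat.card V = 2) :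
    T = ⊤ := by
  have : Finite V := Nat.finite_of_card_ne_zero (by omega)
  have : Nontrivial V := Finite.one_lt_card_iff_nontrivial.mp (by omega)
  ext x y
  refine ⟨Adj.ne, fun hxy => ?_⟩
  obtain ⟨z, hz⟩ := (T.neighborSet_nonempty).mpr (hT.connected.preconnected.not_isIsolated x)
  obtain ⟨_, _, huniq⟩ := (Nat.card_eq_two_iff' x).mp hV
  rwa [huniq y hxy.symm, ← huniq z (Adj.ne hz).symm]

lemma isTree_top_of_card_eq_two (hV : Nat.card V = 2) : (⊤ : SimpleGraph V).IsTree := by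
  have : Finite V := Nat.finite_of_card_ne_zero (by omega)
  have : Nonempty V := (Nat.card_pos_iff.mp (by omega)).1
  exact ⟨connected_top, .of_card_le_two (by rw [ENat.card_eq_coe_natCard, hV]; rfl)⟩

def attachLeaf (l : V) (G : SimpleGraph ({l}ᶜ : Set V)) (w : V) : SimpleGraph V :=
  G.map (Function.Embedding.subtype _) ⊔ edge l w

section attachLeaf

variable {l w : V} {G : SimpleGraph ({l}ᶜ : Set V)}

lemma attachLeaf_adj {x y : V} :
    (attachLeaf l G w).Adj x y ↔
      (∃ (hx : x ≠ l) (hy : y ≠ l), G.Adj ⟨x, hx⟩ ⟨y, hy⟩) ∨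
        ((x = l ∧ y = w ∨ x = w ∧ y = l) ∧ x ≠ y) := by
  simp only [attachLeaf, sup_adj, map_adj, edge_adj]
  simp [Subtype.exists]

lemma neighborSet_attachLeaf_self (hw : w ≠ l) : (attachLeaf l G w).neighborSet l = {w} := by
  ext x
  simp only [mem_neighborSet, attachLeaf_adj, Set.mem_singleton_iff]
  grind

lemma induce_attachLeaf : (attachLeaf l G w).induce {l}ᶜ = G := by
  ext ⟨x, hx⟩ ⟨y, hy⟩
  simp only [comap_adj, Function.Embedding.subtype_apply, attachLeaf_adj]
  grind

lemma attachLeaf_induce {T : SimpleGraph V} (h : T.neighborSet l = {w}) :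
    attachLeaf l (T.induce {l}ᶜ) w = T := by
  have hl : ∀ y, T.Adj l y ↔ y = w := fun y => Set.ext_iff.mp h y
  have hll : ¬ T.Adj l l := T.irrefl
  ext x y
  simp only [attachLeaf_adj, comap_adj, Function.Embedding.coe_subtype]
  by_cases hx : x = l <;> by_cases hy : y = l <;> grind [T.adj_comm]

lemma ncard_neighborSet_attachLeaf [Finite V] [DecidableEq V] (x : ({l}ᶜ : Set V)) :
    ((attachLeaf l G w).neighborSet x).ncard =
      (G.neighborSet x).ncard + if (x : V) = w then 1 else 0 := by
  obtain ⟨x, hx : x ≠ l⟩ := x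
  have himage : l ∉ Subtype.val '' G.neighborSet ⟨x, hx⟩ := by simp
  rcases eq_or_ne x w with rfl | hxw
  · have : (attachLeaf l G x).neighborSet x =
        insert l (Subtype.val '' G.neighborSet ⟨x, hx⟩) := by
      ext y
      simp only [mem_neighborSet, attachLeaf_adj, Set.mem_insert_iff, Set.mem_image]
      grind
    rw [this, Set.ncard_insert_of_notMem himage,
      Set.ncard_image_of_injective _ Subtype.val_injective, if_pos rfl]
  · have : (attachLeaf l G w).neighborSet x = Subtype.val '' G.neighborSet ⟨x, hx⟩ := by
      ext y
      simp only [mem_neighborSet, attachLeaf_adj, Set.mem_image]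
      grind
    rw [this, Set.ncard_image_of_injective _ Subtype.val_injective, if_neg hxw, add_zero]

lemma isTree_attachLeaf (hG : G.IsTree) (hw : w ≠ l) : (attachLeaf l G w).IsTree := by
  have hl := neighborSet_attachLeaf_self (G := G) hw
  have hlw : (attachLeaf l G w).Adj l w := by rw [← mem_neighborSet, hl]; rfl
  let incl : G →g attachLeaf l G w :=
    ⟨Subtype.val, fun {x y} h => attachLeaf_adj.mpr (Or.inl ⟨x.2, y.2, h⟩)⟩
  refine ⟨(connected_iff_exists_forall_reachable _).mpr ⟨w, fun x => ?_⟩, ?_⟩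
  · rcases eq_or_ne x l with rfl | hx
    · exact hlw.reachable.symm
    · exact (hG.connected ⟨w, hw⟩ ⟨x, hx⟩).map incl
  · refine .of_induce_compl_singleton (x := l) (by simp [hl]) ?_
    rw [induce_attachLeaf]
    exact hG.isAcyclic

lemma IsTree.induce_compl_singleton {T : SimpleGraph V} (hT : T.IsTree)
    (h : T.neighborSet l = {w}) : (T.induce {l}ᶜ).IsTree := by
  have hw : w ≠ l := (show T.Adj l w by rw [← mem_neighborSet, h]; rfl).ne'
  have : Nonempty ({l}ᶜ : Set V) := ⟨⟨w, hw⟩⟩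
  refine ⟨⟨hT.connected.preconnected.induce_of_degree_eq_one fun v hv => ?_⟩,
    hT.isAcyclic.induce _⟩
  rw [Set.notMem_compl_iff, Set.mem_singleton_iff] at hv
  simp [hv, h]

end attachLeaf

section Prufer

variable {V : Type u} {n : ℕ}

/-- Any vertex outside the range would do as the leaf: the bijection only needs the choice to
depend on `Set.range s`, which the decoded tree determines as its set of non-leaves. -/
noncomputable def pruferLeaf (s : Fin n → V) (h : n < Nat.card V) : V :=
  (nonempty_compl_range_of_lt h s).some

lemma pruferLeaf_notMem_range (s : Fin n → V) (h : n < Nat.card V) :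
    pruferLeaf s h ∉ Set.range s :=
  (nonempty_compl_range_of_lt h s).some_mem

lemma pruferLeaf_eq_some {s : Fin n → V} {h : n < Nat.card V} {B : Set V}
    (hB : Set.range s = B) (hBc : Bᶜ.Nonempty) : pruferLeaf s h = hBc.some := by
  subst hB
  rfl

def tailCompl {l : V} (s : Fin (n + 1) → V) (hs : l ∉ Set.range s) :
    Fin n → ({l}ᶜ : Set V) :=
  fun i => ⟨s i.succ, fun h => hs ⟨i.succ, h⟩⟩

noncomputable def pruferTree :
    (n : ℕ) → {V : Type u} → Nat.card V = n + 2 → (Fin n → V) → SimpleGraph V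
  | 0, _, _, _ => ⊤
  | n + 1, _, hV, s =>
    attachLeaf (pruferLeaf s (by omega))
      (pruferTree n (Nat.card_compl_singleton hV _) (tailCompl s (pruferLeaf_notMem_range s _)))
      (s 0)

lemma pruferTree_succ (hV : Nat.card V = n + 3) (s : Fin (n + 1) → V) {l : V}
    (hl : pruferLeaf s (by omega) = l) (hs : l ∉ Set.range s) :
    pruferTree (n + 1) hV s =
      attachLeaf l (pruferTree n (Nat.card_compl_singleton hV l) (tailCompl s hs)) (s 0) := by
  subst hl
  rfl

lemma range_eq_setOf_two_le_ncard [DecidableEq V] {T : SimpleGraph V} {s : Fin n → V}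
    (h : ∀ v, (T.neighborSet v).ncard = 1 + #{i | s i = v}) :
    Set.range s = {v | 2 ≤ (T.neighborSet v).ncard} := by
  ext v
  have two_le_one_add (k : ℕ) : 2 ≤ 1 + k ↔ 0 < k := by omega
  simp [h, two_le_one_add, Finset.card_pos, Finset.filter_nonempty_iff]

lemma ncard_neighborSet_attachLeaf_of_tailCompl [Finite V] [DecidableEq V] {l : V}
    (s : Fin (n + 1) → V) (hs : l ∉ Set.range s) {G : SimpleGraph ({l}ᶜ : Set V)}
    (hG : ∀ x, (G.neighborSet x).ncard = 1 + #{i | tailCompl s hs i = x}) (v : V) :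
    ((attachLeaf l G (s 0)).neighborSet v).ncard = 1 + #{i | s i = v} := by
  rcases eq_or_ne v l with rfl | hv
  · rw [neighborSet_attachLeaf_self fun h => hs ⟨0, h⟩, Set.ncard_singleton,
      filter_false_of_mem fun i _ h => hs ⟨i, h⟩, card_empty]
  · rw [ncard_neighborSet_attachLeaf (G := G) (w := s 0) ⟨v, hv⟩, hG,
      Fin.card_filter_univ_succ']
    simp only [tailCompl, eq_comm, Subtype.ext_iff]
    ring

theorem ncard_neighborSet_pruferTree [DecidableEq V] (hV : Nat.card V = n + 2) (s : Fin n → V)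
    (v : V) : ((pruferTree n hV s).neighborSet v).ncard = 1 + #{i | s i = v} := by
  induction n generalizing V with
  | zero =>
    have : Finite V := Nat.finite_of_card_ne_zero (by omega)
    show ((⊤ : SimpleGraph V).neighborSet v).ncard = 1 + #{i | s i = v}
    rw [neighborSet_top, Set.ncard_compl_of_ncard_eq_add _ (by rw [Set.ncard_singleton, hV])]
    simp
  | succ n ih =>
    have : Finite V := Nat.finite_of_card_ne_zero (by omega)
    exact ncard_neighborSet_attachLeaf_of_tailCompl s _ (fun x => ih _ _ x) v

theorem isTree_pruferTree (hV : Nat.card V = n + 2) (s : Fin n → V) :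
    (pruferTree n hV s).IsTree := by
  induction n generalizing V with
  | zero => exact isTree_top_of_card_eq_two hV
  | succ n ih => exact isTree_attachLeaf (ih _ _) fun h => pruferLeaf_notMem_range s _ ⟨0, h⟩

theorem pruferTree_injective (hV : Nat.card V = n + 2) :
    Function.Injective (pruferTree n hV) := by
  classical
  induction n generalizing V with
  | zero => exact fun s t _ => Subsingleton.elim s t
  | succ n ih =>
    intro s t hst
    have hrange : Set.range s = Set.range t := by
      rw [range_eq_setOf_two_le_ncard (ncard_neighborSet_pruferTree hV s), hst,
        ← range_eq_setOf_two_le_ncard (ncard_neighborSet_pruferTree hV t)]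
    obtain ⟨l, hl⟩ : ∃ l, pruferLeaf s (by omega) = l := ⟨_, rfl⟩
    have hs : l ∉ Set.range s := hl ▸ pruferLeaf_notMem_range s _
    have ht : l ∉ Set.range t := hrange ▸ hs
    have hl' : pruferLeaf t (by omega) = l := (pruferLeaf_eq_some hrange.symm _).trans hl
    rw [pruferTree_succ hV s hl hs, pruferTree_succ hV t hl' ht] at hst
    have h0 : s 0 = t 0 := by
      simpa [neighborSet_attachLeaf_self fun h => hs ⟨0, h⟩,
        neighborSet_attachLeaf_self fun h => ht ⟨0, h⟩] using congrArg (·.neighborSet l) hst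
    have htail : tailCompl s hs = tailCompl t ht :=
      ih _ (by simpa only [induce_attachLeaf] using congrArg (·.induce {l}ᶜ) hst)
    funext i
    exact Fin.cases h0 (fun i => congrArg Subtype.val (congrFun htail i)) i

theorem exists_pruferTree_eq (hV : Nat.card V = n + 2) {T : SimpleGraph V} (hT : T.IsTree) :
    ∃ s, pruferTree n hV s = T := by
  classical
  induction n generalizing V with
  | zero => exact ⟨Fin.elim0, (hT.eq_top_of_card_eq_two hV).symm⟩
  | succ n ih =>
    have : Finite V := Nat.finite_of_card_ne_zero (by omega)
    have : Nontrivial V := Finite.one_lt_card_iff_nontrivial.mp (by omega)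
    set B := {v | 2 ≤ (T.neighborSet v).ncard}
    have hB : Bᶜ.Nonempty := by
      obtain ⟨v, hv⟩ := hT.exists_ncard_neighborSet_eq_one
      exact ⟨v, by simp [B, hv]⟩
    set l := hB.some
    obtain ⟨w, hlw⟩ := hT.connected.preconnected.exists_neighborSet_eq_singleton
      (not_le.mp hB.some_mem)
    have hwl : w ≠ l := (show T.Adj l w by rw [← mem_neighborSet, hlw]; rfl).ne'
    obtain ⟨s', hs'⟩ := ih (Nat.card_compl_singleton hV l) (hT.induce_compl_singleton hlw)
    let s : Fin (n + 1) → V := Fin.cons w fun i => s' i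
    have hs : l ∉ Set.range s := by
      rintro ⟨i, hi⟩
      induction i using Fin.cases with
      | zero => exact hwl hi
      | succ j => exact (s' j).2 hi
    have hT' : attachLeaf l (pruferTree n (Nat.card_compl_singleton hV l) (tailCompl s hs)) (s 0)
        = T := by
      rw [show tailCompl s hs = s' from funext fun i => Subtype.ext rfl, hs']
      exact attachLeaf_induce hlw
    have hl : pruferLeaf s (by omega) = l := by
      refine pruferLeaf_eq_some (range_eq_setOf_two_le_ncard ?_) hB
      rw [← hT']
      exact ncard_neighborSet_attachLeaf_of_tailCompl s hs (ncard_neighborSet_pruferTree _ _)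
    exact ⟨s, by rw [pruferTree_succ hV s hl hs, hT']⟩

theorem bijOn_pruferTree (hV : Nat.card V = n + 2) :
    Set.BijOn (pruferTree n hV) Set.univ {T | T.IsTree} :=
  ⟨fun s _ => isTree_pruferTree hV s, (pruferTree_injective hV).injOn, fun _ hT =>
    let ⟨s, hs⟩ := exists_pruferTree_eq hV hT; ⟨s, trivial, hs⟩⟩

end Prufer

end SimpleGraph

/-- for every `n ≥ 2` and every vertex `v` of `K_n`,
`Σ_{T spanning tree of K_n} 2 ^ deg_T(v) = 2 · (n+1) ^ (n−2)`, the number of spanning trees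
of `K_{n+1}` containing a fixed edge. -/
theorem sum_two_pow_degree_spanning_trees (n : ℕ) (hn : 2 ≤ n) (v : Fin n) :
    ∑ᶠ (T : SimpleGraph (Fin n)) (_ : T.IsTree),
        (2 : ℕ) ^ Set.ncard {w : Fin n | T.Adj v w} =
      2 * (n + 1) ^ (n - 2) := by
  obtain ⟨m, rfl⟩ := Nat.exists_eq_add_of_le' hn
  have hV : Nat.card (Fin (m + 2)) = m + 2 := Nat.card_fin _
  calc ∑ᶠ (T : SimpleGraph (Fin (m + 2))) (_ : T.IsTree), 2 ^ Set.ncard {w | T.Adj v w}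
      = ∑ᶠ (s : Fin m → Fin (m + 2)) (_ : s ∈ Set.univ),
          2 ^ ((SimpleGraph.pruferTree m hV s).neighborSet v).ncard :=
        (finsum_mem_eq_of_bijOn _ (SimpleGraph.bijOn_pruferTree hV) fun _ _ => rfl).symm
    _ = 2 * ∑ s : Fin m → Fin (m + 2), 2 ^ #{i | s i = v} := by
        simp [finsum_eq_sum_of_fintype, SimpleGraph.ncard_neighborSet_pruferTree, pow_add,
          mul_sum]
    _ = 2 * (m + 2 + 1) ^ (m + 2 - 2) := by
        rw [Fintype.sum_pow_card_filter_eq, Fintype.card_fin, Nat.cast_id, Nat.add_sub_cancel,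
          Nat.add_succ_sub_one]
        ring
end
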